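/- arXiv:1512.04972 — 10 statements merged into one kernel-verified Lean document; each statement's English description precedes it below -/
import Mathlib

section
/- Let X be an n×n real positive semidefinite matrix, let Y be an n×n real symmetric matrix such that every vector in the kernel of X lies in the kernel of Y (i.e., X·v = 0 implies Y·v = 0), and let P be an n×d real matrix with X = P·Pᵀ. Then there exists a symmetric d×d real matrix R such that Y = P·R·Pᵀ and the column space of R is contained in the column space of Pᵀ. -/
/-!
A Gram matrix `X = P Pᵀ` has a symmetric generalized inverse `U` (`X U X = X`): since
`ker X = ker Pᵀ`, `Pᵀ` factors as `C X`, and `U = Cᵀ C` works. As `ker X ⊆ ker Y`, also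
`Y = D X`, hence `Y U X = Y` and, by symmetry, `X U Y = Y`. Therefore
`Y = X U Y U X = P (Pᵀ U Y U P) Pᵀ`, and `R = Pᵀ U Y U P` is symmetric with column space
inside that of `Pᵀ`.
-/

open Matrix

theorem LinearMap.exists_comp_eq_of_ker_le {K V W U : Type*} [Field K] [AddCommGroup V]
    [Module K V] [AddCommGroup W] [Module K W] [AddCommGroup U] [Module K U]
    (f : V →ₗ[K] W) (g : V →ₗ[K] U) (h : LinearMap.ker f ≤ LinearMap.ker g) :
    ∃ e : W →ₗ[K] U, e ∘ₗ f = g := by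
  obtain ⟨e, he⟩ := LinearMap.exists_extend
    ((LinearMap.ker f).liftQ g h ∘ₗ f.quotKerEquivRange.symm.toLinearMap)
  refine ⟨e, LinearMap.ext fun v => ?_⟩
  simpa using LinearMap.congr_fun he ⟨f v, LinearMap.mem_range_self f v⟩

namespace Matrix

theorem exists_eq_mul_of_mulVec_eq_zero {K l m n : Type*} [Field K] [Fintype m]
    [DecidableEq m] [Fintype n] [DecidableEq n] {A : Matrix m n K} {B : Matrix l n K}
    (h : ∀ v, A *ᵥ v = 0 → B *ᵥ v = 0) : ∃ C : Matrix l m K, B = C * A := by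
  obtain ⟨e, he⟩ := LinearMap.exists_comp_eq_of_ker_le (toLin' A) (toLin' B) fun v => h v
  refine ⟨LinearMap.toMatrix' e, ?_⟩
  rw [← LinearMap.toMatrix'_toLin' A, ← LinearMap.toMatrix'_comp, he, LinearMap.toMatrix'_toLin']

theorem exists_isSymm_mul_mul_eq_self {R m n : Type*} [Field R] [LinearOrder R]
    [IsStrictOrderedRing R] [Fintype m] [DecidableEq m] [Fintype n] (P : Matrix m n R) :
    ∃ U : Matrix m m R, U.IsSymm ∧ P * Pᵀ * U * (P * Pᵀ) = P * Pᵀ := by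
  obtain ⟨C, hC⟩ : ∃ C : Matrix n m R, Pᵀ = C * (P * Pᵀ) := by
    refine exists_eq_mul_of_mulVec_eq_zero fun v hv => ?_
    have hker := SetLike.ext_iff.mp (ker_mulVecLin_transpose_mul_self Pᵀ) v
    simp only [LinearMap.mem_ker, mulVecLin_apply, transpose_transpose] at hker
    exact hker.mp hv
  refine ⟨Cᵀ * C, by simp [IsSymm, transpose_mul], ?_⟩
  calc P * Pᵀ * (Cᵀ * C) * (P * Pᵀ) = (C * (P * Pᵀ))ᵀ * (C * (P * Pᵀ)) := by
        simp only [transpose_mul, transpose_transpose, Matrix.mul_assoc]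
    _ = P * Pᵀ := by rw [← hC, transpose_transpose]

end Matrix

theorem stmt_0_general {n d : ℕ} (X Y : Matrix (Fin n) (Fin n) ℝ)
    (hY : Y.IsSymm)
    (hker : ∀ v : Fin n → ℝ, X.mulVec v = 0 → Y.mulVec v = 0)
    (P : Matrix (Fin n) (Fin d) ℝ) (hXP : X = P * Pᵀ) :
    ∃ R : Matrix (Fin d) (Fin d) ℝ, R.IsSymm ∧ Y = P * R * Pᵀ ∧
      ∀ w : Fin d → ℝ, ∃ u : Fin n → ℝ, R.mulVec w = Pᵀ.mulVec u := by
  obtain ⟨U, hU, hXUX⟩ := P.exists_isSymm_mul_mul_eq_self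
  rw [← hXP] at hXUX
  have hX : Xᵀ = X := by rw [hXP, transpose_mul, transpose_transpose]
  obtain ⟨D, hD⟩ := exists_eq_mul_of_mulVec_eq_zero hker
  have hYUX : Y * U * X = Y := by rw [hD, Matrix.mul_assoc D, Matrix.mul_assoc D, hXUX]
  have hXUY : X * U * Y = Y := by
    simpa only [transpose_mul, hX, hU.eq, hY.eq, Matrix.mul_assoc] using congrArg transpose hYUX
  refine ⟨Pᵀ * (U * Y * U) * P, by simp [IsSymm, transpose_mul, hU.eq, hY.eq, Matrix.mul_assoc],
    ?_, fun w => ⟨(U * Y * U * P) *ᵥ w, by simp only [mulVec_mulVec, Matrix.mul_assoc]⟩⟩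
  calc Y = X * U * (Y * U * X) := by rw [hYUX, hXUY]
    _ = P * (Pᵀ * (U * Y * U) * P) * Pᵀ := by simp only [hXP, Matrix.mul_assoc]

theorem stmt_0 {n d : ℕ} (X Y : Matrix (Fin n) (Fin n) ℝ)
    (hX : X.PosSemidef) (hY : Y.IsSymm)
    (hker : ∀ v : Fin n → ℝ, X.mulVec v = 0 → Y.mulVec v = 0)
    (P : Matrix (Fin n) (Fin d) ℝ) (hXP : X = P * Pᵀ) :
    ∃ R : Matrix (Fin d) (Fin d) ℝ, R.IsSymm ∧ Y = P * R * Pᵀ ∧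
      ∀ w : Fin d → ℝ, ∃ u : Fin n → ℝ, R.mulVec w = Pᵀ.mulVec u :=
  stmt_0_general X Y hY hker P hXP
end

section
/- Let B, C, S be symmetric irreflexive pairwise-disjoint relations on Fin n (bars, cables, struts), let p : Fin n → ℝ^d be vectors with framework matrix P (the n×d matrix whose i-th row is p_iᵀ), and let Z be an n×n real symmetric matrix such that: (i) Z is positive semidefinite; (ii) Z_{ij} = 0 whenever i ≠ j and the pair ij is in none of B, C, S; (iii) Z_{ij} ≥ 0 for all ij ∈ S and Z_{ij} ≤ 0 for all ij ∈ C; (iv) Z·P = 0; (v) the dimension of the kernel of Z equals the rank of P. Then for any m and any vectors q : Fin n → ℝ^m, the conditions [⟨q_i,q_i⟩ = ⟨p_i,p_i⟩ for all i; ⟨q_i,q_j⟩ = ⟨p_i,p_j⟩ for all ij ∈ B; ⟨q_i,q_j⟩ ≥ ⟨p_i,p_j⟩ for all ij ∈ C; ⟨q_i,q_j⟩ ≤ ⟨p_i,p_j⟩ for all ij ∈ S] hold if and only if there exists a symmetric d×d real matrix R such that: (a) the column space of R is contained in span(p_1,…,p_n); (b) p_iᵀ R p_j = 0 for i = j, for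 all ij ∈ B, and for all ij ∈ C ∪ S with Z_{ij} ≠ 0; (c) p_iᵀ R p_j ≥ 0 for ij ∈ C; (d) p_iᵀ R p_j ≤ 0 for ij ∈ S; and Gram(q) = P·Pᵀ + P·R·Pᵀ. -/
/-!
The conditions on `q` say that `D = Gram q - Gram p` vanishes on the diagonal and on bars and is
`≥ 0` on cables and `≤ 0` on struts, so the sign conditions on the stress make every term
`Z i j * D i j` nonpositive. As `Z P = 0`, their sum is `tr (Qᵀ Z Q) ≥ 0`, so all of them vanish
and `Z Q = 0`. The rank condition makes `ker Z` the column space of `P`, hence `Q = P T` and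
`D = P (T Tᵀ - 1) Pᵀ`; compressing `T Tᵀ - 1` to the span of the `p i` gives `R`.
-/

open Matrix

namespace Matrix

variable {ι κ μ : Type*} [Fintype κ]

lemma of_mul_transpose_apply (p : ι → κ → ℝ) (i j : ι) :
    (of p * (of p)ᵀ) i j = p i ⬝ᵥ p j := by
  simp [mul_apply, dotProduct]

lemma of_mul_mul_transpose_apply (p : ι → κ → ℝ) (R : Matrix κ κ ℝ) (i j : ι) :
    (of p * R * (of p)ᵀ) i j = p i ⬝ᵥ R *ᵥ p j := by
  rw [Matrix.mul_assoc]
  simp [mul_apply, dotProduct, mulVec, Finset.mul_sum]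

lemma of_dotProduct_eq_add_iff [Fintype μ] (p : ι → κ → ℝ) (q : ι → μ → ℝ)
    (R : Matrix κ κ ℝ) :
    of (fun i j => q i ⬝ᵥ q j) = of p * (of p)ᵀ + of p * R * (of p)ᵀ ↔
      ∀ i j, p i ⬝ᵥ R *ᵥ p j = q i ⬝ᵥ q j - p i ⬝ᵥ p j := by
  rw [← Matrix.ext_iff]
  refine forall₂_congr fun i j => ?_
  rw [add_apply, of_apply, of_mul_transpose_apply, of_mul_mul_transpose_apply,
    eq_sub_iff_add_eq', eq_comm]

open scoped ComplexOrder MatrixOrder in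
lemma PosSemidef.mul_eq_zero_of_trace_eq_zero [Fintype ι] [Fintype μ] {𝕜 : Type*} [RCLike 𝕜]
    {Z : Matrix ι ι 𝕜} (hZ : Z.PosSemidef) {Q : Matrix ι μ 𝕜} (h : (Qᴴ * Z * Q).trace = 0) :
    Z * Q = 0 := by
  classical
  obtain ⟨B, rfl⟩ := CStarAlgebra.nonneg_iff_eq_star_mul_self.mp hZ.nonneg
  have hBQ : B * Q = 0 := trace_conjTranspose_mul_self_eq_zero_iff.mp <| by
    simpa [conjTranspose_mul, star_eq_conjTranspose, Matrix.mul_assoc] using h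
  rw [Matrix.mul_assoc, hBQ, Matrix.mul_zero]

theorem PosSemidef.mul_eq_zero_of_mul_gram_sub_nonpos [Fintype ι] [Fintype μ]
    {Z : Matrix ι ι ℝ} (hZ : Z.PosSemidef) {P : Matrix ι κ ℝ} (hZP : Z * P = 0)
    {Q : Matrix ι μ ℝ} (hsign : ∀ i j, Z i j * (Q * Qᵀ - P * Pᵀ) i j ≤ 0) :
    Z * Q = 0 ∧ ∀ i j, Z i j * (Q * Qᵀ - P * Pᵀ) i j = 0 := by
  have htrace : ∑ i, ∑ j, Z i j * (Q * Qᵀ - P * Pᵀ) i j = (Qᵀ * Z * Q).trace := by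
    change ∑ i, ∑ j, (Z ⊙ (Q * Qᵀ - P * Pᵀ)) i j = _
    rw [sum_hadamard_eq, transpose_sub, transpose_mul, transpose_mul, transpose_transpose,
      transpose_transpose, Matrix.mul_sub, trace_sub, ← Matrix.mul_assoc Z P, hZP,
      Matrix.zero_mul, trace_zero, sub_zero, ← Matrix.mul_assoc, trace_mul_comm,
      Matrix.mul_assoc]
  have hnonneg : 0 ≤ (Qᵀ * Z * Q).trace := by
    simpa [conjTranspose_eq_transpose_of_trivial] using
      (hZ.conjTranspose_mul_mul_same Q).trace_nonneg
  have hrow_nonpos : ∀ i, ∑ j, Z i j * (Q * Qᵀ - P * Pᵀ) i j ≤ 0 :=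
    fun i => Finset.sum_nonpos fun j _ => hsign i j
  have hsum : ∑ i, ∑ j, Z i j * (Q * Qᵀ - P * Pᵀ) i j = 0 :=
    le_antisymm (Finset.sum_nonpos fun i _ => hrow_nonpos i) (htrace ▸ hnonneg)
  refine ⟨hZ.mul_eq_zero_of_trace_eq_zero ?_, fun i j => ?_⟩
  · rw [conjTranspose_eq_transpose_of_trivial, ← htrace, hsum]
  · have hrow := (Finset.sum_eq_zero_iff_of_nonpos fun i _ => hrow_nonpos i).1 hsum i
      (Finset.mem_univ i)
    exact (Finset.sum_eq_zero_iff_of_nonpos fun j _ => hsign i j).1 hrow j (Finset.mem_univ j)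

lemma exists_eq_mul_of_mul_eq_zero [Fintype ι] [Fintype μ] {K : Type*} [Field K] {Z : Matrix ι ι K}
    {P : Matrix ι κ K} {Q : Matrix ι μ K} (hZP : Z * P = 0)
    (hdim : Module.finrank K (LinearMap.ker Z.mulVecLin) = P.rank) (hZQ : Z * Q = 0) :
    ∃ T : Matrix κ μ K, Q = P * T := by
  classical
  have hker : LinearMap.ker Z.mulVecLin = LinearMap.range P.mulVecLin := by
    refine (Submodule.eq_of_le_of_finrank_le ?_ hdim.le).symm
    rintro _ ⟨v, rfl⟩
    simp [mulVec_mulVec, hZP]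
  have hcol : ∀ l, Q.col l ∈ LinearMap.range P.mulVecLin := fun l => by
    rw [← hker, LinearMap.mem_ker, mulVecLin_apply, ← mulVec_single_one, mulVec_mulVec, hZQ,
      zero_mulVec]
  choose c hc using hcol
  refine ⟨(of c)ᵀ, ?_⟩
  ext i l
  rw [← col_apply Q, ← hc l]
  simp [mulVec, mul_apply, dotProduct]

lemma exists_isSymm_projection (U : Submodule ℝ (κ → ℝ)) :
    ∃ E : Matrix κ κ ℝ, E.IsSymm ∧ (∀ w, E *ᵥ w ∈ U) ∧ ∀ u ∈ U, E *ᵥ u = u := by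
  classical
  let U' : Submodule ℝ (EuclideanSpace ℝ κ) :=
    U.comap (WithLp.linearEquiv 2 ℝ (κ → ℝ)).toLinearMap
  let E := toEuclideanLin.symm U'.starProjection.toLinearMap
  have hE : ∀ w, E *ᵥ w = (U'.starProjection (WithLp.toLp 2 w)).ofLp := fun w => by
    change (toEuclideanLin E (WithLp.toLp 2 w)).ofLp = _
    simp [E]
  refine ⟨E, ?_, fun w => ?_, fun u hu => ?_⟩
  · have : E.IsHermitian := isSymmetric_toEuclideanLin_iff.mp (by
      simpa [E] using U'.starProjection_isSymmetric)
    simpa [IsHermitian, IsSymm] using this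
  · rw [hE]; exact U'.starProjection_apply_mem _
  · rw [hE, Submodule.starProjection_eq_self_iff.mpr (by simpa [U'] using hu)]

lemma exists_isSymm_mul_mul_transpose_eq (p : ι → κ → ℝ) {M : Matrix κ κ ℝ} (hM : M.IsSymm) :
    ∃ R : Matrix κ κ ℝ, R.IsSymm ∧ (∀ w, R *ᵥ w ∈ Submodule.span ℝ (Set.range p)) ∧
      of p * R * (of p)ᵀ = of p * M * (of p)ᵀ := by
  obtain ⟨E, hE, hEmem, hEfix⟩ := exists_isSymm_projection (Submodule.span ℝ (Set.range p))
  have hPE : of p * E = of p := by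
    ext i k
    rw [of_apply, ← hEfix (p i) (Submodule.subset_span ⟨i, rfl⟩)]
    conv_rhs => rw [← hE.eq, mulVec_transpose]
    rfl
  refine ⟨E * M * E, ?_, fun w => ?_, ?_⟩
  · simp [IsSymm, transpose_mul, hE.eq, hM.eq, Matrix.mul_assoc]
  · rw [Matrix.mul_assoc, ← mulVec_mulVec]; exact hEmem _
  · calc of p * (E * M * E) * (of p)ᵀ = (of p * E) * M * (of p * E)ᵀ := by
          rw [transpose_mul, hE.eq]; simp only [Matrix.mul_assoc]
      _ = _ := by rw [hPE]

theorem exists_isSymm_gram_sub_eq_of_stress [Fintype ι] [Fintype μ] {p : ι → κ → ℝ}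
    {q : ι → μ → ℝ} {Z : Matrix ι ι ℝ} (hZ : Z.PosSemidef) (hZP : Z * of p = 0)
    (hdim : Module.finrank ℝ (LinearMap.ker Z.mulVecLin) = (of p).rank)
    (hsign : ∀ i j, Z i j * (q i ⬝ᵥ q j - p i ⬝ᵥ p j) ≤ 0) :
    (∀ i j, Z i j * (q i ⬝ᵥ q j - p i ⬝ᵥ p j) = 0) ∧
      ∃ R : Matrix κ κ ℝ, R.IsSymm ∧ (∀ w, R *ᵥ w ∈ Submodule.span ℝ (Set.range p)) ∧
        ∀ i j, p i ⬝ᵥ R *ᵥ p j = q i ⬝ᵥ q j - p i ⬝ᵥ p j := by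
  classical
  have hgram : ∀ i j, q i ⬝ᵥ q j - p i ⬝ᵥ p j = (of q * (of q)ᵀ - of p * (of p)ᵀ) i j :=
    fun i j => by rw [sub_apply, of_mul_transpose_apply, of_mul_transpose_apply]
  simp only [hgram] at hsign ⊢
  obtain ⟨hZQ, hslack⟩ := hZ.mul_eq_zero_of_mul_gram_sub_nonpos hZP hsign
  obtain ⟨T, hT⟩ := exists_eq_mul_of_mul_eq_zero hZP hdim hZQ
  obtain ⟨R, hR, hRspan, hPRP⟩ := exists_isSymm_mul_mul_transpose_eq p (M := T * Tᵀ - 1)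
    (by simp [IsSymm, transpose_sub, transpose_mul])
  refine ⟨hslack, R, hR, hRspan, fun i j => ?_⟩
  rw [← of_mul_mul_transpose_apply, hPRP, hT]
  simp [Matrix.mul_sub, Matrix.sub_mul, Matrix.mul_assoc, transpose_mul]

end Matrix

theorem stmt_1_general {n d : ℕ} (B C S : Fin n → Fin n → Prop)
    (p : Fin n → Fin d → ℝ)
    (Z : Matrix (Fin n) (Fin n) ℝ)
    (hZpsd : Z.PosSemidef)
    (hZsupp : ∀ i j, i ≠ j → ¬ B i j → ¬ C i j → ¬ S i j → Z i j = 0)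
    (hZS : ∀ i j, S i j → 0 ≤ Z i j) (hZC : ∀ i j, C i j → Z i j ≤ 0)
    (hZP : Z * Matrix.of p = 0)
    (hcor : Module.finrank ℝ (LinearMap.ker Z.mulVecLin) = (Matrix.of p).rank)
    (m : ℕ) (q : Fin n → Fin m → ℝ) :
    ((∀ i, q i ⬝ᵥ q i = p i ⬝ᵥ p i) ∧
     (∀ i j, B i j → q i ⬝ᵥ q j = p i ⬝ᵥ p j) ∧
     (∀ i j, C i j → p i ⬝ᵥ p j ≤ q i ⬝ᵥ q j) ∧
     (∀ i j, S i j → q i ⬝ᵥ q j ≤ p i ⬝ᵥ p j))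
    ↔ ∃ R : Matrix (Fin d) (Fin d) ℝ, R.IsSymm ∧
        (∀ w : Fin d → ℝ, R.mulVec w ∈ Submodule.span ℝ (Set.range p)) ∧
        (∀ i, p i ⬝ᵥ R.mulVec (p i) = 0) ∧
        (∀ i j, B i j → p i ⬝ᵥ R.mulVec (p j) = 0) ∧
        (∀ i j, (C i j ∨ S i j) → Z i j ≠ 0 → p i ⬝ᵥ R.mulVec (p j) = 0) ∧
        (∀ i j, C i j → 0 ≤ p i ⬝ᵥ R.mulVec (p j)) ∧
        (∀ i j, S i j → p i ⬝ᵥ R.mulVec (p j) ≤ 0) ∧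
        Matrix.of (fun i j => q i ⬝ᵥ q j) =
          Matrix.of p * (Matrix.of p)ᵀ + Matrix.of p * R * (Matrix.of p)ᵀ := by
  simp only [of_dotProduct_eq_add_iff]
  constructor
  · rintro ⟨hdiag, hB, hC, hS⟩
    have hsign : ∀ i j, Z i j * (q i ⬝ᵥ q j - p i ⬝ᵥ p j) ≤ 0 := by
      intro i j
      by_cases hij : i = j
      · simp [hij, hdiag]
      by_cases hb : B i j
      · simp [hB i j hb]
      by_cases hc : C i j
      · exact mul_nonpos_of_nonpos_of_nonneg (hZC i j hc) (sub_nonneg.2 (hC i j hc))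
      by_cases hs : S i j
      · exact mul_nonpos_of_nonneg_of_nonpos (hZS i j hs) (sub_nonpos.2 (hS i j hs))
      simp [hZsupp i j hij hb hc hs]
    obtain ⟨hslack, R, hR, hRspan, hPRP⟩ := exists_isSymm_gram_sub_eq_of_stress hZpsd hZP hcor hsign
    refine ⟨R, hR, hRspan, fun i => ?_, fun i j hb => ?_, fun i j _ hZ => ?_,
      fun i j hc => ?_, fun i j hs => ?_, hPRP⟩ <;> rw [hPRP]
    · simp [hdiag]
    · simp [hB i j hb]
    · exact (mul_eq_zero.1 (hslack i j)).resolve_left hZ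
    · exact sub_nonneg.2 (hC i j hc)
    · exact sub_nonpos.2 (hS i j hs)
  · rintro ⟨R, -, -, hdiag, hB, -, hC, hS, hPRP⟩
    exact ⟨fun i => by linarith [hPRP i i, hdiag i],
      fun i j hb => by linarith [hPRP i j, hB i j hb],
      fun i j hc => by linarith [hPRP i j, hC i j hc],
      fun i j hs => by linarith [hPRP i j, hS i j hs]⟩

theorem stmt_1 {n d : ℕ} (B C S : Fin n → Fin n → Prop)
    (hBsymm : Symmetric B) (hCsymm : Symmetric C) (hSsymm : Symmetric S)
    (hBirr : Irreflexive B) (hCirr : Irreflexive C) (hSirr : Irreflexive S)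
    (hBC : ∀ i j, ¬(B i j ∧ C i j)) (hBS : ∀ i j, ¬(B i j ∧ S i j))
    (hCS : ∀ i j, ¬(C i j ∧ S i j))
    (p : Fin n → Fin d → ℝ)
    (Z : Matrix (Fin n) (Fin n) ℝ)
    (hZpsd : Z.PosSemidef)
    (hZsupp : ∀ i j, i ≠ j → ¬ B i j → ¬ C i j → ¬ S i j → Z i j = 0)
    (hZS : ∀ i j, S i j → 0 ≤ Z i j) (hZC : ∀ i j, C i j → Z i j ≤ 0)
    (hZP : Z * Matrix.of p = 0)
    (hcor : Module.finrank ℝ (LinearMap.ker Z.mulVecLin) = (Matrix.of p).rank)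
    (m : ℕ) (q : Fin n → Fin m → ℝ) :
    ((∀ i, q i ⬝ᵥ q i = p i ⬝ᵥ p i) ∧
     (∀ i j, B i j → q i ⬝ᵥ q j = p i ⬝ᵥ p j) ∧
     (∀ i j, C i j → p i ⬝ᵥ p j ≤ q i ⬝ᵥ q j) ∧
     (∀ i j, S i j → q i ⬝ᵥ q j ≤ p i ⬝ᵥ p j))
    ↔ ∃ R : Matrix (Fin d) (Fin d) ℝ, R.IsSymm ∧
        (∀ w : Fin d → ℝ, R.mulVec w ∈ Submodule.span ℝ (Set.range p)) ∧
        (∀ i, p i ⬝ᵥ R.mulVec (p i) = 0) ∧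
        (∀ i j, B i j → p i ⬝ᵥ R.mulVec (p j) = 0) ∧
        (∀ i j, (C i j ∨ S i j) → Z i j ≠ 0 → p i ⬝ᵥ R.mulVec (p j) = 0) ∧
        (∀ i j, C i j → 0 ≤ p i ⬝ᵥ R.mulVec (p j)) ∧
        (∀ i j, S i j → p i ⬝ᵥ R.mulVec (p j) ≤ 0) ∧
        Matrix.of (fun i j => q i ⬝ᵥ q j) =
          Matrix.of p * (Matrix.of p)ᵀ + Matrix.of p * R * (Matrix.of p)ᵀ :=
  stmt_1_general B C S p Z hZpsd hZsupp hZS hZC hZP hcor m q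
end

section
/- Let B, C, S be symmetric irreflexive pairwise-disjoint relations on Fin n (bars, cables, struts), let p : Fin n → ℝ^d with framework matrix P, and suppose there exists an n×n real symmetric matrix Z such that: Z is positive semidefinite; Z_{ij} = 0 whenever i ≠ j and ij is in none of B, C, S; Z_{ij} ≥ 0 for ij ∈ S and Z_{ij} ≤ 0 for ij ∈ C; Z·P = 0; and the dimension of the kernel of Z equals the rank of P. If the only symmetric d×d real matrix R satisfying [column space of R contained in span(p_1,…,p_n); p_iᵀ R p_j = 0 for i = j, for ij ∈ B, and for ij ∈ C ∪ S with Z_{ij} ≠ 0; p_iᵀ R p_j ≥ 0 for ij ∈ C; p_iᵀ R p_j ≤ 0 for ij ∈ S] is R = 0, then the framework is universally completable: for every m and every q : Fin n → ℝ^m with ⟨q_i,q_i⟩ = ⟨p_i,p_i⟩ for all i, ⟨q_i,q_j⟩ = ⟨p_i,p_j⟩ for ij ∈ B, ⟨q_i,q_j⟩ ≥ ⟨p_i,p_j⟩ for ij ∈ C, and ⟨q_i,q_j⟩ ≤ ⟨p_i,p_j⟩ for ij ∈ S, one has Gram(q) = Gram(p). -/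
/-!
Termwise, the constraints on `q` and the sign pattern of `Z` give
`∑ Z_ij ⟨q_i, q_j⟩ ≤ ∑ Z_ij ⟨p_i, p_j⟩ = 0` (the latter since `Z P = 0`), while `Z ⪰ 0` gives
`∑ Z_ij ⟨q_i, q_j⟩ ≥ 0`. So every term is an equality and `Z Q = 0`. The dimension hypothesis makes
`ker Z` the column space of `P Pᵀ`, hence `Q = P Y` and `P = P Y'` where the columns of `Y`, `Y'`
lie in the span of the `p_i`. Then `R = Y Yᵀ - Y' Y'ᵀ` has `p_iᵀ R p_j = ⟨q_i, q_j⟩ - ⟨p_i, p_j⟩`,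
so it satisfies every constraint of the uniqueness hypothesis and vanishes.
-/

open Matrix

namespace Matrix

variable {ι κ μ 𝕜 : Type*}

theorem sum_mul_dotProduct_eq_sum_col [Fintype ι] [Fintype κ] [CommSemiring 𝕜]
    (Z : Matrix ι ι 𝕜) (q : ι → κ → 𝕜) :
    ∑ i, ∑ j, Z i j * (q i ⬝ᵥ q j) = ∑ k, (of q).col k ⬝ᵥ Z *ᵥ (of q).col k := by
  simp only [dotProduct, mulVec, col_apply, of_apply, Finset.mul_sum]
  conv_rhs => rw [Finset.sum_comm]
  refine Finset.sum_congr rfl fun i _ => ?_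
  rw [Finset.sum_comm]
  exact Finset.sum_congr rfl fun j _ => Finset.sum_congr rfl fun k _ => by ring

theorem mul_eq_zero_iff_forall_mulVec_col_eq_zero [Fintype κ] [NonUnitalNonAssocSemiring 𝕜]
    (A : Matrix ι κ 𝕜) (B : Matrix κ μ 𝕜) : A * B = 0 ↔ ∀ k, A *ᵥ B.col k = 0 :=
  ⟨fun h k => funext fun i => congrFun (congrFun h i) k, fun h => ext fun i k => congrFun (h k) i⟩

section PosSemidef

variable [Fintype ι] [Fintype κ] {Z : Matrix ι ι ℝ}

theorem PosSemidef.sum_mul_dotProduct_nonneg (hZ : Z.PosSemidef) (q : ι → κ → ℝ) :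
    0 ≤ ∑ i, ∑ j, Z i j * (q i ⬝ᵥ q j) := by
  rw [sum_mul_dotProduct_eq_sum_col]
  exact Finset.sum_nonneg fun k _ => by simpa using hZ.dotProduct_mulVec_nonneg ((of q).col k)

theorem PosSemidef.sum_mul_dotProduct_eq_zero_iff (hZ : Z.PosSemidef) (q : ι → κ → ℝ) :
    ∑ i, ∑ j, Z i j * (q i ⬝ᵥ q j) = 0 ↔ Z * of q = 0 := by
  rw [sum_mul_dotProduct_eq_sum_col, mul_eq_zero_iff_forall_mulVec_col_eq_zero,
    Finset.sum_eq_zero_iff_of_nonneg fun k _ => by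
      simpa using hZ.dotProduct_mulVec_nonneg ((of q).col k)]
  simp only [Finset.mem_univ, true_implies]
  exact forall_congr' fun k => by simpa using hZ.dotProduct_mulVec_zero_iff ((of q).col k)

end PosSemidef

section Factorization

variable [Fintype ι] [Fintype κ] [Field 𝕜] [LinearOrder 𝕜] [IsStrictOrderedRing 𝕜]
  {Z : Matrix ι ι 𝕜} {P : Matrix ι κ 𝕜}

theorem ker_mulVecLin_eq_range_mul_transpose (hZP : Z * P = 0)
    (hdim : Module.finrank 𝕜 (LinearMap.ker Z.mulVecLin) = P.rank) :
    LinearMap.ker Z.mulVecLin = LinearMap.range (P * Pᵀ).mulVecLin := by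
  refine (Submodule.eq_of_le_of_finrank_eq ?_ ?_).symm
  · rintro _ ⟨v, rfl⟩
    simp [mulVec_mulVec, hZP]
  · rw [hdim, ← rank, rank_self_mul_transpose]

theorem exists_eq_mul_transpose_mul_of_mul_eq_zero (hZP : Z * P = 0)
    (hdim : Module.finrank 𝕜 (LinearMap.ker Z.mulVecLin) = P.rank) {Q : Matrix ι μ 𝕜}
    (hZQ : Z * Q = 0) : ∃ W : Matrix ι μ 𝕜, Q = P * (Pᵀ * W) := by
  have hcol : ∀ k, Q.col k ∈ LinearMap.range (P * Pᵀ).mulVecLin := by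
    intro k
    rw [← ker_mulVecLin_eq_range_mul_transpose hZP hdim]
    exact (mul_eq_zero_iff_forall_mulVec_col_eq_zero Z Q).1 hZQ k
  choose w hw using hcol
  refine ⟨(of w)ᵀ, ?_⟩
  rw [← Matrix.mul_assoc]
  exact ext fun i k => (congrFun (hw k) i).symm

end Factorization

theorem dotProduct_mul_transpose_mulVec_of_eq_mul [Fintype κ] [Fintype μ] [CommSemiring 𝕜]
    {P : Matrix ι κ 𝕜} {Q : Matrix ι μ 𝕜} {Y : Matrix κ μ 𝕜} (h : Q = P * Y) (i j : ι) :
    P i ⬝ᵥ (Y * Yᵀ) *ᵥ P j = Q i ⬝ᵥ Q j := by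
  rw [h, ← mulVec_mulVec, dotProduct_mulVec, mulVec_transpose]
  rfl

theorem mul_transpose_mulVec_mem_span_range [Fintype ι] [Fintype κ] [Fintype μ] [Field 𝕜]
    {p : ι → κ → 𝕜} {W : Matrix ι μ 𝕜} {Y : Matrix κ μ 𝕜} (hY : Y = (of p)ᵀ * W) (w : κ → 𝕜) :
    (Y * Yᵀ) *ᵥ w ∈ Submodule.span 𝕜 (Set.range p) := by
  rw [← mulVec_mulVec, hY, ← mulVec_mulVec, mulVec_transpose]
  exact range_vecMulLinear (of p) ▸ LinearMap.mem_range_self _ _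

theorem exists_isSymm_dotProduct_mulVec_eq_sub [Fintype ι] [Fintype κ] [Fintype μ] [Field 𝕜]
    {p : ι → κ → 𝕜} {q : ι → μ → 𝕜} (hP : ∃ W : Matrix ι κ 𝕜, of p = of p * ((of p)ᵀ * W))
    (hQ : ∃ W : Matrix ι μ 𝕜, of q = of p * ((of p)ᵀ * W)) :
    ∃ A : Matrix κ κ 𝕜, A.IsSymm ∧ (∀ w, A *ᵥ w ∈ Submodule.span 𝕜 (Set.range p)) ∧
      ∀ i j, p i ⬝ᵥ A *ᵥ p j = q i ⬝ᵥ q j - p i ⬝ᵥ p j := by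
  obtain ⟨WP, hWP⟩ := hP
  obtain ⟨WQ, hWQ⟩ := hQ
  set YP := (of p)ᵀ * WP with hYP
  set YQ := (of p)ᵀ * WQ with hYQ
  refine ⟨YQ * YQᵀ - YP * YPᵀ, IsSymm.sub (transpose_mul _ _) (transpose_mul _ _), fun w => ?_,
    fun i j => ?_⟩
  · rw [sub_mulVec]
    exact Submodule.sub_mem _ (mul_transpose_mulVec_mem_span_range hYQ w)
      (mul_transpose_mulVec_mem_span_range hYP w)
  · rw [sub_mulVec, dotProduct_sub]
    exact congrArg₂ (· - ·) (dotProduct_mul_transpose_mulVec_of_eq_mul hWQ i j)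
      (dotProduct_mul_transpose_mulVec_of_eq_mul hWP i j)

end Matrix

theorem eq_of_sum_sum_eq_of_le {ι κ M : Type*} [Fintype ι] [Fintype κ] [AddCommMonoid M]
    [PartialOrder M] [IsOrderedCancelAddMonoid M] {f g : ι → κ → M} (hle : ∀ i j, f i j ≤ g i j)
    (h : ∑ i, ∑ j, f i j = ∑ i, ∑ j, g i j) (i : ι) (j : κ) : f i j = g i j := by
  rw [Finset.sum_eq_sum_iff_of_le fun i _ => Finset.sum_le_sum fun j _ => hle i j] at h
  exact (Finset.sum_eq_sum_iff_of_le fun j _ => hle i j).1 (h i (Finset.mem_univ i)) j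
    (Finset.mem_univ j)

theorem mul_le_mul_of_stress_signs {ι : Type*} (B C S : ι → ι → Prop) (Z : Matrix ι ι ℝ)
    (hZsupp : ∀ i j, i ≠ j → ¬ B i j → ¬ C i j → ¬ S i j → Z i j = 0)
    (hZS : ∀ i j, S i j → 0 ≤ Z i j) (hZC : ∀ i j, C i j → Z i j ≤ 0) (G H : ι → ι → ℝ)
    (hdiag : ∀ i, H i i = G i i) (hB : ∀ i j, B i j → H i j = G i j)
    (hC : ∀ i j, C i j → G i j ≤ H i j) (hS : ∀ i j, S i j → H i j ≤ G i j) (i j : ι) :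
    Z i j * H i j ≤ Z i j * G i j := by
  by_cases hij : i = j
  · rw [hij, hdiag]
  by_cases hBij : B i j
  · rw [hB i j hBij]
  by_cases hCij : C i j
  · exact mul_le_mul_of_nonpos_left (hC i j hCij) (hZC i j hCij)
  by_cases hSij : S i j
  · exact mul_le_mul_of_nonneg_left (hS i j hSij) (hZS i j hSij)
  rw [hZsupp i j hij hBij hCij hSij, zero_mul, zero_mul]

theorem stmt_2_general {n d : ℕ} (B C S : Fin n → Fin n → Prop)
    (p : Fin n → Fin d → ℝ)
    (Z : Matrix (Fin n) (Fin n) ℝ)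
    (hZpsd : Z.PosSemidef)
    (hZsupp : ∀ i j, i ≠ j → ¬ B i j → ¬ C i j → ¬ S i j → Z i j = 0)
    (hZS : ∀ i j, S i j → 0 ≤ Z i j) (hZC : ∀ i j, C i j → Z i j ≤ 0)
    (hZP : Z * Matrix.of p = 0)
    (hcor : Module.finrank ℝ (LinearMap.ker Z.mulVecLin) = (Matrix.of p).rank)
    (hunique : ∀ R : Matrix (Fin d) (Fin d) ℝ, R.IsSymm →
        (∀ w : Fin d → ℝ, R.mulVec w ∈ Submodule.span ℝ (Set.range p)) →
        (∀ i, p i ⬝ᵥ R.mulVec (p i) = 0) →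
        (∀ i j, B i j → p i ⬝ᵥ R.mulVec (p j) = 0) →
        (∀ i j, (C i j ∨ S i j) → Z i j ≠ 0 → p i ⬝ᵥ R.mulVec (p j) = 0) →
        (∀ i j, C i j → 0 ≤ p i ⬝ᵥ R.mulVec (p j)) →
        (∀ i j, S i j → p i ⬝ᵥ R.mulVec (p j) ≤ 0) → R = 0) :
    ∀ (m : ℕ) (q : Fin n → Fin m → ℝ),
      (∀ i, q i ⬝ᵥ q i = p i ⬝ᵥ p i) →
      (∀ i j, B i j → q i ⬝ᵥ q j = p i ⬝ᵥ p j) →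
      (∀ i j, C i j → p i ⬝ᵥ p j ≤ q i ⬝ᵥ q j) →
      (∀ i j, S i j → q i ⬝ᵥ q j ≤ p i ⬝ᵥ p j) →
      ∀ i j, q i ⬝ᵥ q j = p i ⬝ᵥ p j := by
  intro m q hq0 hqB hqC hqS
  have hle := mul_le_mul_of_stress_signs B C S Z hZsupp hZS hZC _ _ hq0 hqB hqC hqS
  have hsum : ∑ i, ∑ j, Z i j * (q i ⬝ᵥ q j) = ∑ i, ∑ j, Z i j * (p i ⬝ᵥ p j) := by
    refine le_antisymm (Finset.sum_le_sum fun i _ => Finset.sum_le_sum fun j _ => hle i j) ?_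
    rw [(hZpsd.sum_mul_dotProduct_eq_zero_iff p).2 hZP]
    exact hZpsd.sum_mul_dotProduct_nonneg q
  have heq := eq_of_sum_sum_eq_of_le hle hsum
  have hZQ : Z * of q = 0 := by
    rw [← hZpsd.sum_mul_dotProduct_eq_zero_iff, hsum, hZpsd.sum_mul_dotProduct_eq_zero_iff]
    exact hZP
  obtain ⟨R, hRsymm, hRspan, hR⟩ := exists_isSymm_dotProduct_mulVec_eq_sub
    (exists_eq_mul_transpose_mul_of_mul_eq_zero hZP hcor hZP)
    (exists_eq_mul_transpose_mul_of_mul_eq_zero hZP hcor hZQ)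
  have hR0 : R = 0 := hunique R hRsymm hRspan
    (fun i => by rw [hR, hq0, sub_self]) (fun i j hB => by rw [hR, hqB i j hB, sub_self])
    (fun i j _ hZ => by rw [hR, mul_left_cancel₀ hZ (heq i j), sub_self])
    (fun i j hC => by rw [hR, sub_nonneg]; exact hqC i j hC)
    (fun i j hS => by rw [hR, sub_nonpos]; exact hqS i j hS)
  intro i j
  simpa [hR0, sub_eq_zero] using (hR i j).symm

theorem stmt_2 {n d : ℕ} (B C S : Fin n → Fin n → Prop)
    (hBsymm : Symmetric B) (hCsymm : Symmetric C) (hSsymm : Symmetric S)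
    (hBirr : Irreflexive B) (hCirr : Irreflexive C) (hSirr : Irreflexive S)
    (hBC : ∀ i j, ¬(B i j ∧ C i j)) (hBS : ∀ i j, ¬(B i j ∧ S i j))
    (hCS : ∀ i j, ¬(C i j ∧ S i j))
    (p : Fin n → Fin d → ℝ)
    (Z : Matrix (Fin n) (Fin n) ℝ)
    (hZpsd : Z.PosSemidef)
    (hZsupp : ∀ i j, i ≠ j → ¬ B i j → ¬ C i j → ¬ S i j → Z i j = 0)
    (hZS : ∀ i j, S i j → 0 ≤ Z i j) (hZC : ∀ i j, C i j → Z i j ≤ 0)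
    (hZP : Z * Matrix.of p = 0)
    (hcor : Module.finrank ℝ (LinearMap.ker Z.mulVecLin) = (Matrix.of p).rank)
    (hunique : ∀ R : Matrix (Fin d) (Fin d) ℝ, R.IsSymm →
        (∀ w : Fin d → ℝ, R.mulVec w ∈ Submodule.span ℝ (Set.range p)) →
        (∀ i, p i ⬝ᵥ R.mulVec (p i) = 0) →
        (∀ i j, B i j → p i ⬝ᵥ R.mulVec (p j) = 0) →
        (∀ i j, (C i j ∨ S i j) → Z i j ≠ 0 → p i ⬝ᵥ R.mulVec (p j) = 0) →
        (∀ i j, C i j → 0 ≤ p i ⬝ᵥ R.mulVec (p j)) →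
        (∀ i j, S i j → p i ⬝ᵥ R.mulVec (p j) ≤ 0) → R = 0) :
    ∀ (m : ℕ) (q : Fin n → Fin m → ℝ),
      (∀ i, q i ⬝ᵥ q i = p i ⬝ᵥ p i) →
      (∀ i j, B i j → q i ⬝ᵥ q j = p i ⬝ᵥ p j) →
      (∀ i j, C i j → p i ⬝ᵥ p j ≤ q i ⬝ᵥ q j) →
      (∀ i j, S i j → q i ⬝ᵥ q j ≤ p i ⬝ᵥ p j) →
      ∀ i j, q i ⬝ᵥ q j = p i ⬝ᵥ p j :=
  stmt_2_general B C S p Z hZpsd hZsupp hZS hZC hZP hcor hunique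
end

section
/- Let n = 2k+1 with k ≥ 1, let C_n be the cycle graph on vertex set ZMod n (x adjacent to y iff x − y = ±1), and for each x ∈ ZMod n let p_x = (cos(2πkx/n), sin(2πkx/n)) ∈ ℝ² (where x is represented by its value in {0,…,n−1}). Then this framework is universally completable: for every m and every family q : ZMod n → ℝ^m satisfying ⟨q_x,q_x⟩ = 1 for all x and ⟨q_x,q_y⟩ = ⟨p_x,p_y⟩ for all adjacent x, y, one has ⟨q_x,q_y⟩ = ⟨p_x,p_y⟩ for all x, y; equivalently, ⟨q_x,q_y⟩ = cos(2πk·((x−y) mod n)/n) for all x, y. -/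
/-!
Fix `y` and put `w i = (-1) ^ i • q (y + i)`. Consecutive `w`'s make the angle
`π - 2πk/(2k+1) = π/(2k+1)`, while `w (2k+1) = -w 0` makes the angle `π` with `w 0`. By the
triangle inequality for angles the path `w 0, …, w (2k+1)` has length exactly `π`, so it is a
geodesic: the angle between `w 0` and `w j` is `jπ/(2k+1)`. This pins down
`⟪q y, q (y + j)⟫ = (-1) ^ j cos (jπ/(2k+1)) = cos (2πkj/(2k+1))`, the value for `p`.
-/

open Matrix Real InnerProductGeometry

section
variable {V : Type*} [NormedAddCommGroup V] [InnerProductSpace ℝ V]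

theorem angle_eq_of_inner_eq_cos {x y : V} (hx : ‖x‖ = 1) (hy : ‖y‖ = 1) {θ : ℝ}
    (h : inner ℝ x y = cos θ) (h0 : 0 ≤ θ) (hπ : θ ≤ π) : angle x y = θ := by
  rw [angle, hx, hy, mul_one, div_one, h, arccos_cos h0 hπ]

theorem angle_le_mul_of_angle_succ_le {w : ℕ → V} (hw : ∀ i, w i ≠ 0) {δ : ℝ}
    (h : ∀ i, angle (w i) (w (i + 1)) ≤ δ) (i j : ℕ) :
    angle (w i) (w (i + j)) ≤ j * δ := by
  induction j with
  | zero => simp [angle_self (hw i)]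
  | succ j ih =>
    calc angle (w i) (w (i + (j + 1)))
        ≤ angle (w i) (w (i + j)) + angle (w (i + j)) (w (i + j + 1)) :=
          angle_le_angle_add_angle _ _ _
      _ ≤ j * δ + δ := add_le_add ih (h _)
      _ = (j + 1 : ℕ) * δ := by push_cast; ring

theorem angle_eq_mul_of_angle_succ_le_of_angle_eq_pi {w : ℕ → V} (hw : ∀ i, w i ≠ 0) {N : ℕ}
    (h : ∀ i, angle (w i) (w (i + 1)) ≤ π / N) (hN : angle (w 0) (w N) = π) {j : ℕ}
    (hj : j ≤ N) : angle (w 0) (w j) = j * (π / N) := by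
  obtain ⟨l, rfl⟩ := Nat.exists_eq_add_of_le hj
  have hπ : (j : ℝ) * (π / (j + l : ℕ)) + l * (π / (j + l : ℕ)) ≤ π := by
    rw [← add_mul, ← Nat.cast_add]
    rcases eq_or_ne (j + l) 0 with h0 | h0
    · simp [h0, pi_nonneg]
    · rw [mul_div_cancel₀ _ (by exact_mod_cast h0)]
  have head := angle_le_mul_of_angle_succ_le hw h 0 j
  have tail := angle_le_mul_of_angle_succ_le hw h j l
  have tri := angle_le_angle_add_angle (w 0) (w j) (w (j + l))
  rw [zero_add] at head
  linarith

theorem inner_eq_cos_of_inner_add_one_eq_cos {k : ℕ} {u : ZMod (2 * k + 1) → V}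
    (hu : ∀ z, ‖u z‖ = 1) (hedge : ∀ z, inner ℝ (u (z + 1)) (u z) = cos (2 * π * k / (2 * k + 1)))
    (x y : ZMod (2 * k + 1)) :
    inner ℝ (u x) (u y) = cos (2 * π * k * (x - y).val / (2 * k + 1)) := by
  have hNR : ((2 * k + 1 : ℕ) : ℝ) = 2 * k + 1 := by push_cast; ring
  set w : ℕ → V := fun i => (-1 : ℝ) ^ i • u (y + i)
  have hw : ∀ i, ‖w i‖ = 1 := fun i => by simp [w, norm_smul, hu]
  have hstep : ∀ i, angle (w i) (w (i + 1)) = π / (2 * k + 1 : ℕ) := by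
    intro i
    refine angle_eq_of_inner_eq_cos (hw _) (hw _) ?_ (by positivity)
      (div_le_self pi_nonneg (by simp))
    have hsign : (-1 : ℝ) ^ i * (-1) ^ (i + 1) = -1 := by
      rw [← pow_add, show i + (i + 1) = 2 * i + 1 by ring, pow_succ, pow_mul]; simp
    have hπ : π / (2 * k + 1 : ℕ) = π - 2 * π * k / (2 * k + 1) := by
      rw [hNR]; field_simp; ring
    rw [hπ, cos_pi_sub]
    simp only [w, real_inner_smul_left, real_inner_smul_right, Nat.cast_succ, ← add_assoc]
    rw [real_inner_comm, hedge]
    linear_combination cos (2 * π * k / (2 * k + 1)) * hsign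
  have hN : angle (w 0) (w (2 * k + 1)) = π := by
    have hodd : (-1 : ℝ) ^ (2 * k + 1) = -1 := Odd.neg_one_pow (odd_two_mul_add_one k)
    simp only [w, pow_zero, one_smul, Nat.cast_zero, add_zero, ZMod.natCast_self, hodd,
      neg_one_smul]
    exact angle_self_neg_of_nonzero (norm_ne_zero_iff.mp (by simp [hu]))
  set j := (x - y).val
  have hx : y + j = x := by simp [j]
  have hangle := angle_eq_mul_of_angle_succ_le_of_angle_eq_pi
    (fun i => norm_ne_zero_iff.mp (by simp [hw])) (fun i => (hstep i).le) hN
    (ZMod.val_lt (x - y)).le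
  have hcos : inner ℝ (w 0) (w j) = cos (j * (π / (2 * k + 1 : ℕ))) := by
    rw [← hangle, ← cos_angle_mul_norm_mul_norm, hw, hw, mul_one, mul_one]
  have harg : 2 * π * k * j / (2 * k + 1) = j * π - j * (π / (2 * k + 1 : ℕ)) := by
    rw [hNR]; field_simp; ring
  rw [harg, cos_nat_mul_pi_sub, ← hcos]
  simp only [w, real_inner_smul_left, real_inner_smul_right, pow_zero, one_mul, Nat.cast_zero,
    add_zero, hx, ← mul_assoc, ← mul_pow]
  simp [real_inner_comm]
end

theorem dotProduct_cos_sin (a b : ℝ) : ![cos a, sin a] ⬝ᵥ ![cos b, sin b] = cos (a - b) := by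
  simp [dotProduct, Fin.sum_univ_two, cos_sub]

theorem cos_two_pi_mul_val_sub_val {n : ℕ} (k : ℕ) (x y : ZMod n) :
    cos (2 * π * k * x.val / n - 2 * π * k * y.val / n) = cos (2 * π * k * (x - y).val / n) := by
  rcases eq_or_ne n 0 with rfl | hn
  · simp
  have : NeZero n := ⟨hn⟩
  have hmod : (((x.val - y.val : ℤ)) : ZMod n) = (((x - y).val : ℤ) : ZMod n) := by
    push_cast; simp only [ZMod.natCast_zmod_val]
  obtain ⟨t, ht⟩ := (ZMod.intCast_eq_intCast_iff_dvd_sub _ _ _).mp hmod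
  have htR : ((x - y).val : ℝ) = x.val - y.val + n * t := by
    have := congrArg (Int.cast : ℤ → ℝ) ht
    push_cast at this
    linarith
  rw [htR, ← cos_add_int_mul_two_pi _ (k * t)]
  congr 1
  push_cast
  field_simp

theorem stmt_4 (k : ℕ) (hk : 1 ≤ k)
    (p : ZMod (2 * k + 1) → Fin 2 → ℝ)
    (hp : ∀ x : ZMod (2 * k + 1),
        p x = ![Real.cos (2 * Real.pi * k * x.val / (2 * k + 1)),
                Real.sin (2 * Real.pi * k * x.val / (2 * k + 1))])
    (m : ℕ) (q : ZMod (2 * k + 1) → Fin m → ℝ)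
    (hunit : ∀ x, q x ⬝ᵥ q x = 1)
    (hedge : ∀ x y : ZMod (2 * k + 1), (x - y = 1 ∨ x - y = -1) →
        q x ⬝ᵥ q y = p x ⬝ᵥ p y) :
    ∀ x y : ZMod (2 * k + 1), q x ⬝ᵥ q y = p x ⬝ᵥ p y := by
  have hp_dot : ∀ x y, p x ⬝ᵥ p y = cos (2 * π * k * (x - y).val / (2 * k + 1)) := by
    intro x y
    rw [hp, hp, dotProduct_cos_sin]
    exact_mod_cast cos_two_pi_mul_val_sub_val (n := 2 * k + 1) k x y
  let u : ZMod (2 * k + 1) → EuclideanSpace ℝ (Fin m) := fun x => WithLp.toLp 2 (q x)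
  have hu_inner : ∀ x y, inner ℝ (u x) (u y) = q x ⬝ᵥ q y := fun x y => by
    simp [u, EuclideanSpace.inner_toLp_toLp, dotProduct_comm]
  have hu_norm : ∀ x, ‖u x‖ = 1 := fun x => by
    rw [norm_eq_sqrt_real_inner, hu_inner, hunit, sqrt_one]
  have hu_edge : ∀ z, inner ℝ (u (z + 1)) (u z) = cos (2 * π * k / (2 * k + 1)) := by
    intro z
    rw [hu_inner, hedge _ _ (Or.inl (add_sub_cancel_left z 1)), hp_dot, add_sub_cancel_left,
      ZMod.val_one'' (by omega), Nat.cast_one, mul_one]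
  intro x y
  rw [hp_dot, ← hu_inner, inner_eq_cos_of_inner_add_one_eq_cos hu_norm hu_edge]
end

section
/- Let G be a simple graph on vertex set Fin n with adjacency matrix A, let τ be the least eigenvalue of A, and let P be an n×d matrix with PᵀP = I_d, AP = τP, and every v with Av = τv lying in the column space of P; let p_1,…,p_n be the rows of P. Define 𝒳(G) = {X : n×n real symmetric, X_{ij} = 0 whenever i = j or i ∼ j, and (A − τI)·X = 0} and ℛ(G) = {R : d×d real symmetric, p_iᵀ R p_j = 0 whenever i = j or i ∼ j}. Then the map Φ(R) = P·R·Pᵀ is a linear bijection from ℛ(G) onto 𝒳(G) with inverse X ↦ Pᵀ·X·P; moreover, for R ∈ ℛ(G), the matrix P·Pᵀ + Φ(R) is positive semidefinite if and only if I_d + R is positive semidefinite. -/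
/-!
Since `PᵀP = I`, the maps `R ↦ PRPᵀ` and `X ↦ PᵀXP` are inverse to each other as soon as
`PPᵀX = X = XPPᵀ`. For `X ∈ 𝒳(G)` this holds because `(A - τI)X = 0` puts every column of `X`
in the `τ`-eigenspace, i.e. in the column space of `P`, and `X` is symmetric. The zero patterns
correspond through `(PRPᵀ)ᵢⱼ = pᵢᵀ R pⱼ`, and `PPᵀ + PRPᵀ = P(I + R)Pᵀ` is positive semidefinite
iff `I + R` is, congruence by `P` and by `Pᵀ` both preserving positive semidefiniteness.
-/

open Matrix

namespace Matrix

variable {m k l α : Type*} [Fintype k]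

lemma mul_mul_transpose_apply [CommSemiring α] (A : Matrix m k α) (B : Matrix k k α)
    (C : Matrix m k α) (i j : m) : (A * B * Cᵀ) i j = A i ⬝ᵥ B *ᵥ C j := by
  rw [Matrix.mul_assoc]
  simp only [mul_apply, dotProduct, mulVec, transpose_apply, Finset.mul_sum]

lemma IsSymm.mul_mul_transpose [CommSemiring α] {B : Matrix k k α} (hB : B.IsSymm)
    (A : Matrix m k α) : (A * B * Aᵀ).IsSymm := by
  rw [IsSymm, transpose_mul, transpose_mul, transpose_transpose, hB.eq, Matrix.mul_assoc]

lemma mul_mul_mul_mul_of_mul_eq_one [Fintype m] [DecidableEq k] [Semiring α]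
    {Q : Matrix k m α} {P : Matrix m k α} (h : Q * P = 1) (R : Matrix k k α) :
    Q * (P * R * Q) * P = R := by
  rw [← Matrix.mul_assoc, ← Matrix.mul_assoc, h, Matrix.one_mul, Matrix.mul_assoc, h,
    Matrix.mul_one]

section Projection

variable [Fintype m] [CommSemiring α] [DecidableEq k] {M : Matrix m m α} {P : Matrix m k α}

lemma mul_transpose_mul_eq_self_of_mul_eq_zero (hP : Pᵀ * P = 1)
    (hker : ∀ v, M *ᵥ v = 0 → ∃ w, P *ᵥ w = v) {X : Matrix m l α} (hX : M * X = 0) :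
    P * Pᵀ * X = X := by
  ext i j
  obtain ⟨w, hw⟩ := hker (fun r => X r j) (funext fun r => congrFun (congrFun hX r) j)
  change ((P * Pᵀ) *ᵥ fun r => X r j) i = X i j
  rw [← hw, mulVec_mulVec, Matrix.mul_assoc, hP, Matrix.mul_one]
  exact congrFun hw i

lemma mul_transpose_mul_mul_mul_transpose_eq_self (hP : Pᵀ * P = 1)
    (hker : ∀ v, M *ᵥ v = 0 → ∃ w, P *ᵥ w = v) {X : Matrix m m α} (hXs : X.IsSymm)
    (hX : M * X = 0) : P * (Pᵀ * X * P) * Pᵀ = X := by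
  have hleft : P * Pᵀ * X = X := mul_transpose_mul_eq_self_of_mul_eq_zero hP hker hX
  have hright : X * (P * Pᵀ) = X := by
    simpa [transpose_mul, hXs.eq, Matrix.mul_assoc] using congrArg transpose hleft
  calc P * (Pᵀ * X * P) * Pᵀ = P * Pᵀ * X * (P * Pᵀ) := by simp only [Matrix.mul_assoc]
    _ = X := by rw [hleft, hright]

end Projection

lemma posSemidef_mul_mul_conjTranspose_iff [Fintype m] [DecidableEq k] {R : Type*} [CommRing R]
    [PartialOrder R] [StarRing R] [StarOrderedRing R] {P : Matrix m k R} (hP : Pᴴ * P = 1)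
    {M : Matrix k k R} : (P * M * Pᴴ).PosSemidef ↔ M.PosSemidef :=
  ⟨fun h => mul_mul_mul_mul_of_mul_eq_one hP M ▸ h.conjTranspose_mul_mul_same P,
    fun h => h.mul_mul_conjTranspose_same P⟩

end Matrix

theorem stmt_6_general {n d : ℕ} (G : SimpleGraph (Fin n)) [DecidableRel G.Adj] (τ : ℝ)
    (P : Matrix (Fin n) (Fin d) ℝ)
    (hPortho : Pᵀ * P = 1)
    (hAP : G.adjMatrix ℝ * P = τ • P)
    (hspan : ∀ v : Fin n → ℝ, (G.adjMatrix ℝ).mulVec v = τ • v →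
        ∃ w : Fin d → ℝ, P.mulVec w = v) :
    -- Φ maps ℛ(G) into 𝒳(G)
    (∀ R : Matrix (Fin d) (Fin d) ℝ,
       R.IsSymm → (∀ i j, (i = j ∨ G.Adj i j) → P i ⬝ᵥ R.mulVec (P j) = 0) →
       ((P * R * Pᵀ).IsSymm ∧
        (∀ i j, (i = j ∨ G.Adj i j) → (P * R * Pᵀ) i j = 0) ∧
        (G.adjMatrix ℝ - τ • 1) * (P * R * Pᵀ) = 0)) ∧
    -- the inverse map X ↦ Pᵀ X P maps 𝒳(G) into ℛ(G)
    (∀ X : Matrix (Fin n) (Fin n) ℝ,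
       X.IsSymm → (∀ i j, (i = j ∨ G.Adj i j) → X i j = 0) →
       (G.adjMatrix ℝ - τ • 1) * X = 0 →
       ((Pᵀ * X * P).IsSymm ∧
        (∀ i j, (i = j ∨ G.Adj i j) → P i ⬝ᵥ (Pᵀ * X * P).mulVec (P j) = 0))) ∧
    -- Φ is injective on ℛ(G): Pᵀ (Φ R) P = R
    (∀ R : Matrix (Fin d) (Fin d) ℝ,
       R.IsSymm → (∀ i j, (i = j ∨ G.Adj i j) → P i ⬝ᵥ R.mulVec (P j) = 0) →
       Pᵀ * (P * R * Pᵀ) * P = R) ∧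
    -- Φ is surjective onto 𝒳(G): Φ (Pᵀ X P) = X
    (∀ X : Matrix (Fin n) (Fin n) ℝ,
       X.IsSymm → (∀ i j, (i = j ∨ G.Adj i j) → X i j = 0) →
       (G.adjMatrix ℝ - τ • 1) * X = 0 →
       P * (Pᵀ * X * P) * Pᵀ = X) ∧
    -- psd characterization
    (∀ R : Matrix (Fin d) (Fin d) ℝ,
       R.IsSymm → (∀ i j, (i = j ∨ G.Adj i j) → P i ⬝ᵥ R.mulVec (P j) = 0) →
       ((P * Pᵀ + P * R * Pᵀ).PosSemidef ↔ (1 + R).PosSemidef)) := by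
  have hMP : (G.adjMatrix ℝ - τ • 1) * P = 0 := by
    rw [Matrix.sub_mul, hAP, Matrix.smul_mul, Matrix.one_mul, sub_self]
  have hker : ∀ v, (G.adjMatrix ℝ - τ • 1) *ᵥ v = 0 → ∃ w, P *ᵥ w = v := fun v hv =>
    hspan v (by rwa [sub_mulVec, smul_mulVec, one_mulVec, sub_eq_zero] at hv)
  have hsurj {X : Matrix (Fin n) (Fin n) ℝ} (hXs : X.IsSymm)
      (hX : (G.adjMatrix ℝ - τ • 1) * X = 0) : P * (Pᵀ * X * P) * Pᵀ = X :=
    mul_transpose_mul_mul_mul_transpose_eq_self hPortho hker hXs hX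
  refine ⟨fun R hR hRz => ⟨hR.mul_mul_transpose P,
      fun i j hij => (mul_mul_transpose_apply P R P i j).trans (hRz i j hij), ?_⟩,
    fun X hXs hXz hX => ⟨by simpa using hXs.mul_mul_transpose Pᵀ, fun i j hij => ?_⟩,
    fun R _ _ => mul_mul_mul_mul_of_mul_eq_one hPortho R,
    fun X hXs _ hX => hsurj hXs hX,
    fun R _ _ => ?_⟩
  · rw [← Matrix.mul_assoc, ← Matrix.mul_assoc, hMP, Matrix.zero_mul, Matrix.zero_mul]
  · rw [← mul_mul_transpose_apply, hsurj hXs hX]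
    exact hXz i j hij
  · have hPstar : Pᴴ = Pᵀ := conjTranspose_eq_transpose_of_trivial P
    have hsum : P * Pᵀ + P * R * Pᵀ = P * (1 + R) * Pᴴ := by
      rw [hPstar, Matrix.mul_add, Matrix.add_mul, Matrix.mul_one]
    rw [hsum]
    exact posSemidef_mul_mul_conjTranspose_iff (hPstar ▸ hPortho)

theorem stmt_6 {n d : ℕ} (G : SimpleGraph (Fin n)) [DecidableRel G.Adj] (τ : ℝ)
    (hτeig : ∃ v : Fin n → ℝ, v ≠ 0 ∧ (G.adjMatrix ℝ).mulVec v = τ • v)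
    (hτpsd : (G.adjMatrix ℝ - τ • 1).PosSemidef)
    (P : Matrix (Fin n) (Fin d) ℝ)
    (hPortho : Pᵀ * P = 1)
    (hAP : G.adjMatrix ℝ * P = τ • P)
    (hspan : ∀ v : Fin n → ℝ, (G.adjMatrix ℝ).mulVec v = τ • v →
        ∃ w : Fin d → ℝ, P.mulVec w = v) :
    -- Φ maps ℛ(G) into 𝒳(G)
    (∀ R : Matrix (Fin d) (Fin d) ℝ,
       R.IsSymm → (∀ i j, (i = j ∨ G.Adj i j) → P i ⬝ᵥ R.mulVec (P j) = 0) →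
       ((P * R * Pᵀ).IsSymm ∧
        (∀ i j, (i = j ∨ G.Adj i j) → (P * R * Pᵀ) i j = 0) ∧
        (G.adjMatrix ℝ - τ • 1) * (P * R * Pᵀ) = 0)) ∧
    -- the inverse map X ↦ Pᵀ X P maps 𝒳(G) into ℛ(G)
    (∀ X : Matrix (Fin n) (Fin n) ℝ,
       X.IsSymm → (∀ i j, (i = j ∨ G.Adj i j) → X i j = 0) →
       (G.adjMatrix ℝ - τ • 1) * X = 0 →
       ((Pᵀ * X * P).IsSymm ∧
        (∀ i j, (i = j ∨ G.Adj i j) → P i ⬝ᵥ (Pᵀ * X * P).mulVec (P j) = 0))) ∧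
    -- Φ is injective on ℛ(G): Pᵀ (Φ R) P = R
    (∀ R : Matrix (Fin d) (Fin d) ℝ,
       R.IsSymm → (∀ i j, (i = j ∨ G.Adj i j) → P i ⬝ᵥ R.mulVec (P j) = 0) →
       Pᵀ * (P * R * Pᵀ) * P = R) ∧
    -- Φ is surjective onto 𝒳(G): Φ (Pᵀ X P) = X
    (∀ X : Matrix (Fin n) (Fin n) ℝ,
       X.IsSymm → (∀ i j, (i = j ∨ G.Adj i j) → X i j = 0) →
       (G.adjMatrix ℝ - τ • 1) * X = 0 →
       P * (Pᵀ * X * P) * Pᵀ = X) ∧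
    -- psd characterization
    (∀ R : Matrix (Fin d) (Fin d) ℝ,
       R.IsSymm → (∀ i j, (i = j ∨ G.Adj i j) → P i ⬝ᵥ R.mulVec (P j) = 0) →
       ((P * Pᵀ + P * R * Pᵀ).PosSemidef ↔ (1 + R).PosSemidef)) :=
  stmt_6_general G τ P hPortho hAP hspan
end

section
/- Let G be a simple graph on vertex set Fin n with adjacency matrix A, let τ be the least eigenvalue of A, suppose the edge set of G is partitioned into bars B and struts S (no cables), and let P be an n×d matrix with PᵀP = I_d, AP = τP, and every v with Av = τv lying in the column space of P; let p_1,…,p_n be the rows of P. Then for an n×n real symmetric matrix X, the matrix P·Pᵀ + X is the Gram matrix of a framework dominated by p (that is, P·Pᵀ + X is positive semidefinite, (P·Pᵀ + X)_{ii} = (P·Pᵀ)_{ii} for all i, (P·Pᵀ + X)_{ij} = (P·Pᵀ)_{ij} for ij ∈ B, and (P·Pᵀ + X)_{ij} ≤ (P·Pᵀ)_{ij} for ij ∈ S) if and only if X_{ij} = 0 whenever i = j or i ∼ j, (A − τI)·X = 0, and X + I is positive semidefinite (equivalently the least eigenvalue of X is ≥ −1). -/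
/-!
`Π = P Pᵀ` is the orthogonal projection onto the `τ`-eigenspace of `A`, i.e. onto the kernel of
the positive semidefinite matrix `N = A - τ I`, and `N Π = 0`. If `Π + X` is positive semidefinite
and dominated by `Π`, then `tr (N (Π + X)) = tr (N X)` is the sum of the entries of `X` over the
edges, hence `≤ 0`; as the trace of a product of two positive semidefinite matrices it is also
`≥ 0`, and its vanishing forces `N X = 0` and `X = 0` on the edges. Once `N X = 0`, the columns of
`X` lie in the eigenspace, so `X = Π X Π`, and the identities `Π + X = Π (I + X) Π` and
`I + X = (Π + X) + (I - Π)` show that `Π + X` and `I + X` are positive semidefinite together.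
-/

open Matrix

namespace Matrix

section PosSemidef

open scoped ComplexOrder

variable {n 𝕜 : Type*} [Fintype n] [RCLike 𝕜] {N M : Matrix n n 𝕜}

theorem IsHermitian.posSemidef_of_isIdempotentElem (hN : N.IsHermitian)
    (hNN : IsIdempotentElem N) : N.PosSemidef := by
  rw [← hNN.eq]
  nth_rewrite 1 [← hN.eq]
  exact posSemidef_conjTranspose_mul_self N

variable [DecidableEq n]

open scoped MatrixOrder in
theorem PosSemidef.exists_eq_conjTranspose_mul_self (hN : N.PosSemidef) :
    ∃ D : Matrix n n 𝕜, N = Dᴴ * D :=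
  CStarAlgebra.nonneg_iff_eq_star_mul_self.mp hN.nonneg

theorem PosSemidef.trace_mul_nonneg (hN : N.PosSemidef) (hM : M.PosSemidef) :
    0 ≤ (N * M).trace := by
  obtain ⟨D, rfl⟩ := hN.exists_eq_conjTranspose_mul_self
  rw [Matrix.mul_assoc, trace_mul_comm]
  exact hM.mul_mul_conjTranspose_same D |>.trace_nonneg

theorem PosSemidef.mul_eq_zero_of_trace_mul_eq_zero (hN : N.PosSemidef) (hM : M.PosSemidef)
    (h : (N * M).trace = 0) : N * M = 0 := by
  obtain ⟨D, rfl⟩ := hN.exists_eq_conjTranspose_mul_self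
  obtain ⟨S, rfl⟩ := hM.exists_eq_conjTranspose_mul_self
  rw [Matrix.mul_assoc, trace_mul_comm,
    (posSemidef_conjTranspose_mul_self S).mul_mul_conjTranspose_same D |>.trace_eq_zero_iff] at h
  have hDS : D * Sᴴ = 0 := by
    rwa [show D * (Sᴴ * S) * Dᴴ = D * Sᴴ * (D * Sᴴ)ᴴ by
      simp only [conjTranspose_mul, conjTranspose_conjTranspose, Matrix.mul_assoc],
      self_mul_conjTranspose_eq_zero] at h
  rw [conjTranspose_mul_self_mul_eq_zero, mul_conjTranspose_mul_self_eq_zero, hDS]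

theorem posSemidef_add_iff_posSemidef_add_one {Q X : Matrix n n 𝕜} (hQ : Q.IsHermitian)
    (hQQ : IsIdempotentElem Q) (hX : X.IsHermitian) (hQX : Q * X = X) :
    (Q + X).PosSemidef ↔ (X + 1).PosSemidef := by
  have hXQ : X * Q = X := by
    simpa only [conjTranspose_mul, hQ.eq, hX.eq] using congrArg conjTranspose hQX
  constructor
  · intro h
    have hcompl : (1 - Q).PosSemidef :=
      (isHermitian_one.sub hQ).posSemidef_of_isIdempotentElem hQQ.one_sub
    rw [show X + 1 = Q + X + (1 - Q) by abel]
    exact h.add hcompl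
  · intro h
    have hconj : Qᴴ * (X + 1) * Q = Q + X := by
      rw [hQ.eq, Matrix.mul_add, Matrix.add_mul, hQX, hXQ, Matrix.mul_one, hQQ.eq, add_comm]
    exact hconj ▸ h.conjTranspose_mul_mul_same Q

end PosSemidef

theorem mul_transpose_mul_eq_self_of_mul_eq_zero_s7 {m d k R : Type*} [Fintype m] [Fintype d]
    [DecidableEq d] [Semiring R] {N : Matrix m m R} {P : Matrix m d R} (hP : Pᵀ * P = 1)
    (hker : ∀ v, N *ᵥ v = 0 → ∃ w, P *ᵥ w = v) {Y : Matrix m k R} (hY : N * Y = 0) :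
    P * Pᵀ * Y = Y := by
  have hcol : ∀ j, ∃ w, P *ᵥ w = Y.col j := fun j =>
    hker _ (funext fun i => congrFun (congrFun hY i) j)
  choose w hw using hcol
  obtain rfl : Y = P * (of w)ᵀ := by
    ext i j
    exact (congrFun (hw j) i).symm
  rw [← Matrix.mul_assoc, Matrix.mul_assoc P, hP, Matrix.mul_one]

end Matrix

theorem SimpleGraph.adjMatrix_sub_smul_one_mul_apply {V R : Type*} [Fintype V] [DecidableEq V]
    (G : SimpleGraph V) [DecidableRel G.Adj] [Ring R] (τ : R) (X : Matrix V V R) (i j : V) :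
    ((G.adjMatrix R - τ • 1) * X) i j = ∑ k ∈ G.neighborFinset i, X k j - τ * X i j := by
  simp [Matrix.sub_mul]

theorem SimpleGraph.adjMatrix_sub_smul_one_mul_eq_zero {V : Type*} [Fintype V] [DecidableEq V]
    (G : SimpleGraph V) [DecidableRel G.Adj] {τ : ℝ} (hτ : (G.adjMatrix ℝ - τ • 1).PosSemidef)
    {Q X : Matrix V V ℝ} (hQ : (G.adjMatrix ℝ - τ • 1) * Q = 0) (hQX : (Q + X).PosSemidef)
    (hdiag : ∀ i, X i i = 0) (hadj : ∀ i j, G.Adj i j → X i j ≤ 0) :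
    (G.adjMatrix ℝ - τ • 1) * X = 0 ∧ ∀ i j, G.Adj i j → X i j = 0 := by
  set N := G.adjMatrix ℝ - τ • 1
  have hNX_diag : ∀ i, (N * X) i i = ∑ k ∈ G.neighborFinset i, X k i := fun i => by
    simp [N, G.adjMatrix_sub_smul_one_mul_apply, hdiag]
  have hterm : ∀ i, ∀ k ∈ G.neighborFinset i, X k i ≤ 0 := fun i k hk =>
    hadj k i ((G.mem_neighborFinset i k).1 hk).symm
  have hNM : N * (Q + X) = N * X := by rw [Matrix.mul_add, hQ, zero_add]
  have htrace : (N * (Q + X)).trace = 0 := by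
    refine le_antisymm ?_ (hτ.trace_mul_nonneg hQX)
    rw [hNM]
    exact Finset.sum_nonpos fun i _ => (hNX_diag i).trans_le (Finset.sum_nonpos (hterm i))
  have hNX : N * X = 0 := hNM ▸ hτ.mul_eq_zero_of_trace_mul_eq_zero hQX htrace
  refine ⟨hNX, fun i j hij => ?_⟩
  have hsum : ∑ k ∈ G.neighborFinset j, X k j = 0 := by rw [← hNX_diag, hNX, Matrix.zero_apply]
  exact (Finset.sum_eq_zero_iff_of_nonpos (hterm j)).1 hsum i ((G.mem_neighborFinset j i).2 hij.symm)

theorem stmt_7_general {n d : ℕ} (G : SimpleGraph (Fin n)) [DecidableRel G.Adj] (τ : ℝ)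
    (hτpsd : (G.adjMatrix ℝ - τ • 1).PosSemidef)
    (B S : Fin n → Fin n → Prop)
    (hpart : ∀ i j, G.Adj i j ↔ (B i j ∨ S i j))
    (P : Matrix (Fin n) (Fin d) ℝ)
    (hPortho : Pᵀ * P = 1)
    (hAP : G.adjMatrix ℝ * P = τ • P)
    (hspan : ∀ v : Fin n → ℝ, (G.adjMatrix ℝ).mulVec v = τ • v →
        ∃ w : Fin d → ℝ, P.mulVec w = v)
    (X : Matrix (Fin n) (Fin n) ℝ) (hX : X.IsSymm) :
    ((P * Pᵀ + X).PosSemidef ∧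
     (∀ i, (P * Pᵀ + X) i i = (P * Pᵀ) i i) ∧
     (∀ i j, B i j → (P * Pᵀ + X) i j = (P * Pᵀ) i j) ∧
     (∀ i j, S i j → (P * Pᵀ + X) i j ≤ (P * Pᵀ) i j))
    ↔
    ((∀ i j, (i = j ∨ G.Adj i j) → X i j = 0) ∧
     (G.adjMatrix ℝ - τ • 1) * X = 0 ∧
     (X + 1).PosSemidef) := by
  set N := G.adjMatrix ℝ - τ • 1
  have hNP : N * (P * Pᵀ) = 0 := by
    rw [← Matrix.mul_assoc, Matrix.sub_mul, hAP, smul_mul, Matrix.one_mul, sub_self,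
      Matrix.zero_mul]
  have hker : ∀ v, N *ᵥ v = 0 → ∃ w, P *ᵥ w = v := fun v hv =>
    hspan v (by rwa [sub_mulVec, smul_mulVec, one_mulVec, sub_eq_zero] at hv)
  have hproj : IsIdempotentElem (P * Pᵀ) := by
    rw [IsIdempotentElem, Matrix.mul_assoc, ← Matrix.mul_assoc Pᵀ, hPortho, Matrix.one_mul]
  have hpsd_iff (hNX : N * X = 0) : (P * Pᵀ + X).PosSemidef ↔ (X + 1).PosSemidef :=
    posSemidef_add_iff_posSemidef_add_one (by simpa using isHermitian_mul_conjTranspose_self P)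
      hproj (by simpa using hX) (mul_transpose_mul_eq_self_of_mul_eq_zero_s7 hPortho hker hNX)
  simp only [Matrix.add_apply, add_eq_left, add_le_iff_nonpos_right]
  constructor
  · rintro ⟨hpsd, hdiag, hB, hS⟩
    have hadj (i j) (hij : G.Adj i j) : X i j ≤ 0 := by
      rcases (hpart i j).1 hij with hij | hij
      exacts [(hB i j hij).le, hS i j hij]
    obtain ⟨hNX, hXadj⟩ := G.adjMatrix_sub_smul_one_mul_eq_zero hτpsd hNP hpsd hdiag hadj
    refine ⟨fun i j hij => ?_, hNX, (hpsd_iff hNX).1 hpsd⟩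
    rcases hij with rfl | hij
    exacts [hdiag i, hXadj i j hij]
  · rintro ⟨hzero, hNX, hXI⟩
    refine ⟨(hpsd_iff hNX).2 hXI, fun i => hzero i i (.inl rfl), fun i j hij => ?_,
      fun i j hij => ?_⟩
    · exact hzero i j (.inr ((hpart i j).2 (.inl hij)))
    · exact (hzero i j (.inr ((hpart i j).2 (.inr hij)))).le

theorem stmt_7 {n d : ℕ} (G : SimpleGraph (Fin n)) [DecidableRel G.Adj] (τ : ℝ)
    (hτeig : ∃ v : Fin n → ℝ, v ≠ 0 ∧ (G.adjMatrix ℝ).mulVec v = τ • v)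
    (hτpsd : (G.adjMatrix ℝ - τ • 1).PosSemidef)
    (B S : Fin n → Fin n → Prop)
    (hBsymm : Symmetric B) (hSsymm : Symmetric S)
    (hpart : ∀ i j, G.Adj i j ↔ (B i j ∨ S i j))
    (hBS : ∀ i j, ¬(B i j ∧ S i j))
    (P : Matrix (Fin n) (Fin d) ℝ)
    (hPortho : Pᵀ * P = 1)
    (hAP : G.adjMatrix ℝ * P = τ • P)
    (hspan : ∀ v : Fin n → ℝ, (G.adjMatrix ℝ).mulVec v = τ • v →
        ∃ w : Fin d → ℝ, P.mulVec w = v)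
    (X : Matrix (Fin n) (Fin n) ℝ) (hX : X.IsSymm) :
    ((P * Pᵀ + X).PosSemidef ∧
     (∀ i, (P * Pᵀ + X) i i = (P * Pᵀ) i i) ∧
     (∀ i j, B i j → (P * Pᵀ + X) i j = (P * Pᵀ) i j) ∧
     (∀ i j, S i j → (P * Pᵀ + X) i j ≤ (P * Pᵀ) i j))
    ↔
    ((∀ i j, (i = j ∨ G.Adj i j) → X i j = 0) ∧
     (G.adjMatrix ℝ - τ • 1) * X = 0 ∧
     (X + 1).PosSemidef) :=
  stmt_7_general G τ hτpsd B S hpart P hPortho hAP hspan X hX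
end

section
/- Let G be a simple graph on vertex set Fin n with adjacency matrix A, let τ be the least eigenvalue of A, and let p_1,…,p_n be the rows of an n×d matrix P with PᵀP = I_d, AP = τP, and every v with Av = τv lying in the column space of P. Suppose that for every vertex i, the least eigenvalue of the subgraph of G induced on the vertices outside the closed neighborhood N[i] is strictly greater than τ; equivalently, for every i and every nonzero v ∈ ℝ^n with v_j = 0 for all j ∈ N[i], one has vᵀAv > τ·vᵀv. Then the least eigenvalue framework of G is universally completable: for every m and every q : Fin n → ℝ^m with ⟨q_i,q_i⟩ = ⟨p_i,p_i⟩ for all i and ⟨q_i,q_j⟩ ≤ ⟨p_i,p_j⟩ for all edges ij, one has Gram(q) = Gram(p). -/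
/-!
Put `M = A - τ I ⪰ 0`, let `Q` have rows `q i`, and `D = P Pᵀ - Q Qᵀ`. Since `M P = 0`,
`∑ M_ab D_ab = -tr (Qᵀ M Q) ≤ 0`; but every term `M_ab D_ab` is nonnegative (`D` vanishes on
the diagonal, `M` vanishes off the edges and is `1` on them, where `D ≥ 0`). Hence
`tr (Qᵀ M Q) = 0`, so `M Q = 0`, and `D` vanishes on the edges. Each column `D_{·j}` then lies
in `ker M`, i.e. is a `τ`-eigenvector of `A`, and vanishes on `N[j]`; by the hypothesis on the
graph outside `N[j]` it is zero.
-/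

open Matrix
open scoped ComplexOrder

namespace Matrix

variable {ι κ : Type*} [Fintype ι] [Fintype κ]

theorem trace_transpose_mul_mul_eq_sum {R : Type*} [CommSemiring R] (M : Matrix ι ι R)
    (X : Matrix ι κ R) : trace (Xᵀ * M * X) = ∑ a, ∑ b, M a b * (X * Xᵀ) a b := by
  rw [trace_mul_cycle, trace_mul_comm]
  refine Finset.sum_congr rfl fun a _ => Finset.sum_congr rfl fun b _ => ?_
  simp only [mul_apply, transpose_apply, mul_comm (X b _)]

theorem PosSemidef.mul_eq_zero_of_trace_conjTranspose_mul_mul_eq_zero {𝕜 : Type*} [RCLike 𝕜]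
    {M : Matrix ι ι 𝕜} (hM : M.PosSemidef) {X : Matrix ι κ 𝕜}
    (h : trace (Xᴴ * M * X) = 0) : M * X = 0 := by
  have hXMX := ((hM.conjTranspose_mul_mul_same X).trace_eq_zero_iff).1 h
  ext a k
  have hcol : star (fun b => X b k) ⬝ᵥ M *ᵥ (fun b => X b k) = 0 := by
    have hkk := congrFun (congrFun hXMX k) k
    simp only [mul_apply, dotProduct, mulVec, Finset.mul_sum, Finset.sum_mul, mul_assoc,
      conjTranspose_apply, Pi.star_apply, zero_apply] at hkk ⊢
    rwa [Finset.sum_comm] at hkk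
  exact congrFun ((hM.dotProduct_mulVec_zero_iff _).1 hcol) a

end Matrix

namespace SimpleGraph

variable {V R : Type*} [DecidableEq V] (G : SimpleGraph V) [DecidableRel G.Adj] [Ring R]

theorem adjMatrix_sub_smul_one_apply_of_adj (τ : R) {a b : V} (h : G.Adj a b) :
    (G.adjMatrix R - τ • 1) a b = 1 := by
  simp [h, one_apply_ne h.ne]

theorem adjMatrix_sub_smul_one_mul_nonneg [PartialOrder R] [IsOrderedRing R] (τ : R)
    {D : Matrix V V R} (hdiag : ∀ a, D a a = 0) (hadj : ∀ a b, G.Adj a b → 0 ≤ D a b)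
    (a b : V) : 0 ≤ (G.adjMatrix R - τ • 1) a b * D a b := by
  by_cases hab : G.Adj a b
  · simpa [G.adjMatrix_sub_smul_one_apply_of_adj τ hab] using hadj a b hab
  · by_cases heq : a = b
    · simp [heq, hdiag]
    · simp [hab, one_apply_ne heq]

section Framework

variable {κ κ' : Type*} [Fintype κ] [Fintype κ'] {τ : ℝ} {P : Matrix V κ ℝ}
  {Q : Matrix V κ' ℝ}

theorem sum_adjMatrix_sub_smul_one_mul_gram_sub [Fintype V]
    (hMP : (G.adjMatrix ℝ - τ • 1) * P = 0) :
    ∑ a, ∑ b, (G.adjMatrix ℝ - τ • 1) a b * (P * Pᵀ - Q * Qᵀ) a b =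
      -trace (Qᵀ * (G.adjMatrix ℝ - τ • 1) * Q) := by
  have hP : trace (Pᵀ * (G.adjMatrix ℝ - τ • 1) * P) = 0 := by
    rw [Matrix.mul_assoc, hMP, Matrix.mul_zero, trace_zero]
  simp only [Matrix.sub_apply (P * Pᵀ), mul_sub, Finset.sum_sub_distrib,
    ← trace_transpose_mul_mul_eq_sum, hP, zero_sub]

variable (hnorm : ∀ a, Q a ⬝ᵥ Q a = P a ⬝ᵥ P a)
  (hedge : ∀ a b, G.Adj a b → Q a ⬝ᵥ Q b ≤ P a ⬝ᵥ P b)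
include hnorm hedge

theorem adjMatrix_sub_smul_one_mul_gram_sub_nonneg (a b : V) :
    0 ≤ (G.adjMatrix ℝ - τ • 1) a b * (P * Pᵀ - Q * Qᵀ) a b :=
  G.adjMatrix_sub_smul_one_mul_nonneg τ (fun a => sub_eq_zero.2 (hnorm a).symm)
    (fun a b hab => sub_nonneg.2 (hedge a b hab)) a b

variable [Fintype V]

theorem adjMatrix_sub_smul_one_mul_eq_zero_of_gram_le (hM : (G.adjMatrix ℝ - τ • 1).PosSemidef)
    (hMP : (G.adjMatrix ℝ - τ • 1) * P = 0) : (G.adjMatrix ℝ - τ • 1) * Q = 0 := by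
  refine hM.mul_eq_zero_of_trace_conjTranspose_mul_mul_eq_zero ?_
  have hQ := (hM.conjTranspose_mul_mul_same Q).trace_nonneg
  have hsum := G.sum_adjMatrix_sub_smul_one_mul_gram_sub (Q := Q) hMP
  have hsum_nonneg : 0 ≤ ∑ a, ∑ b, (G.adjMatrix ℝ - τ • 1) a b * (P * Pᵀ - Q * Qᵀ) a b :=
    Finset.sum_nonneg fun a _ => Finset.sum_nonneg fun b _ =>
      G.adjMatrix_sub_smul_one_mul_gram_sub_nonneg hnorm hedge a b
  rw [conjTranspose_eq_transpose_of_trivial] at hQ ⊢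
  linarith

theorem gram_eq_of_adj_of_gram_le (hM : (G.adjMatrix ℝ - τ • 1).PosSemidef)
    (hMP : (G.adjMatrix ℝ - τ • 1) * P = 0) {a b : V} (hab : G.Adj a b) :
    Q a ⬝ᵥ Q b = P a ⬝ᵥ P b := by
  have hterm := G.adjMatrix_sub_smul_one_mul_gram_sub_nonneg (τ := τ) hnorm hedge
  have hsum : ∑ a, ∑ b, (G.adjMatrix ℝ - τ • 1) a b * (P * Pᵀ - Q * Qᵀ) a b = 0 := by
    rw [G.sum_adjMatrix_sub_smul_one_mul_gram_sub hMP, Matrix.mul_assoc,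
      G.adjMatrix_sub_smul_one_mul_eq_zero_of_gram_le hnorm hedge hM hMP, Matrix.mul_zero,
      trace_zero, neg_zero]
  have hrow := (Fintype.sum_eq_zero_iff_of_nonneg fun a => Finset.sum_nonneg fun b _ =>
    hterm a b).1 hsum
  have hab0 := congrFun ((Fintype.sum_eq_zero_iff_of_nonneg (hterm a)).1 (congrFun hrow a)) b
  rw [Pi.zero_apply, G.adjMatrix_sub_smul_one_apply_of_adj τ hab, one_mul, Matrix.sub_apply,
    sub_eq_zero] at hab0
  exact hab0.symm

end Framework

end SimpleGraph

theorem stmt_8_general {n d : ℕ} (G : SimpleGraph (Fin n)) [DecidableRel G.Adj] (τ : ℝ)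
    (hτpsd : (G.adjMatrix ℝ - τ • 1).PosSemidef)
    (P : Matrix (Fin n) (Fin d) ℝ)
    (hAP : G.adjMatrix ℝ * P = τ • P)
    (hnbhd : ∀ i : Fin n, ∀ v : Fin n → ℝ, v ≠ 0 →
        (∀ j, (j = i ∨ G.Adj i j) → v j = 0) →
        τ * (v ⬝ᵥ v) < v ⬝ᵥ (G.adjMatrix ℝ).mulVec v) :
    ∀ (m : ℕ) (q : Fin n → Fin m → ℝ),
      (∀ i, q i ⬝ᵥ q i = P i ⬝ᵥ P i) →
      (∀ i j, G.Adj i j → q i ⬝ᵥ q j ≤ P i ⬝ᵥ P j) →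
      ∀ i j, q i ⬝ᵥ q j = P i ⬝ᵥ P j := by
  intro m q hnorm hedge i j
  set M := G.adjMatrix ℝ - τ • 1 with hM
  set Q : Matrix (Fin n) (Fin m) ℝ := Matrix.of q
  have hMP : M * P = 0 := by rw [hM, Matrix.sub_mul, hAP, smul_mul, Matrix.one_mul, sub_self]
  have hMQ : M * Q = 0 := G.adjMatrix_sub_smul_one_mul_eq_zero_of_gram_le hnorm hedge hτpsd hMP
  have hMD : M * (P * Pᵀ - Q * Qᵀ) = 0 := by
    rw [Matrix.mul_sub, ← Matrix.mul_assoc, ← Matrix.mul_assoc, hMP, hMQ, Matrix.zero_mul,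
      Matrix.zero_mul, sub_self]
  set v : Fin n → ℝ := fun a => (P * Pᵀ - Q * Qᵀ) a j
  have hAv : G.adjMatrix ℝ *ᵥ v = τ • v := by
    have hMv : M *ᵥ v = 0 := funext fun a => congrFun (congrFun hMD a) j
    rwa [hM, sub_mulVec, smul_mulVec, one_mulVec, sub_eq_zero] at hMv
  have hv : v = 0 := by
    by_contra hne
    refine (hnbhd j v hne ?_).ne ?_
    · rintro k (rfl | hjk)
      · exact sub_eq_zero.2 (hnorm k).symm
      · exact sub_eq_zero.2 (G.gram_eq_of_adj_of_gram_le hnorm hedge hτpsd hMP hjk.symm).symm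
    · rw [hAv, dotProduct_smul, smul_eq_mul]
  exact (sub_eq_zero.1 (congrFun hv i)).symm

theorem stmt_8 {n d : ℕ} (G : SimpleGraph (Fin n)) [DecidableRel G.Adj] (τ : ℝ)
    (hτeig : ∃ v : Fin n → ℝ, v ≠ 0 ∧ (G.adjMatrix ℝ).mulVec v = τ • v)
    (hτpsd : (G.adjMatrix ℝ - τ • 1).PosSemidef)
    (P : Matrix (Fin n) (Fin d) ℝ)
    (hPortho : Pᵀ * P = 1)
    (hAP : G.adjMatrix ℝ * P = τ • P)
    (hspan : ∀ v : Fin n → ℝ, (G.adjMatrix ℝ).mulVec v = τ • v →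
        ∃ w : Fin d → ℝ, P.mulVec w = v)
    (hnbhd : ∀ i : Fin n, ∀ v : Fin n → ℝ, v ≠ 0 →
        (∀ j, (j = i ∨ G.Adj i j) → v j = 0) →
        τ * (v ⬝ᵥ v) < v ⬝ᵥ (G.adjMatrix ℝ).mulVec v) :
    ∀ (m : ℕ) (q : Fin n → Fin m → ℝ),
      (∀ i, q i ⬝ᵥ q i = P i ⬝ᵥ P i) →
      (∀ i j, G.Adj i j → q i ⬝ᵥ q j ≤ P i ⬝ᵥ P j) →
      ∀ i j, q i ⬝ᵥ q j = P i ⬝ᵥ P j :=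
  stmt_8_general G τ hτpsd P hAP hnbhd
end

section
/- Let G be a simple graph on vertex set Fin n with adjacency matrix A, let τ be the least eigenvalue of A, and let p_1,…,p_n be the rows of an n×d matrix P with PᵀP = I_d, AP = τP, and every v with Av = τv lying in the column space of P. Suppose there exists a clique C ⊆ Fin n of G (a set of pairwise adjacent vertices) such that the principal submatrix of A − τI indexed by the vertices not in C is invertible. Then the least eigenvalue framework of G is universally completable: for every m and every q : Fin n → ℝ^m with ⟨q_i,q_i⟩ = ⟨p_i,p_i⟩ for all i and ⟨q_i,q_j⟩ ≤ ⟨p_i,p_j⟩ for all edges ij, one has Gram(q) = Gram(p). -/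
/-!
Let `M = A - τ • 1 ⪰ 0`, so `M P = 0`, and let `X = Q Qᵀ - P Pᵀ` be the difference of Gram
matrices. Then `tr (M X) = tr (M Q Qᵀ) ≥ 0`. On the other hand `X` vanishes on the diagonal and
is nonpositive on edges, while off the diagonal `M` is the adjacency matrix, so every term of
`tr (M X) = ∑ M_ij X_ji` is nonpositive. Hence `tr (M Q Qᵀ) = 0`, which forces `M Q = 0`, so
`M X = 0` and `X` vanishes on edges, in particular on `C × C`. A vector killed by `M` and
vanishing on `C` is zero since `M` is invertible off `C`; applying this to the columns of `X`
indexed by `C`, and then by symmetry to all columns, gives `X = 0`.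
-/

open Matrix

namespace Matrix

section Trace

open scoped ComplexOrder MatrixOrder

variable {𝕜 ι κ : Type*} [RCLike 𝕜] [Fintype ι] [Fintype κ] {M : Matrix ι ι 𝕜}

theorem PosSemidef.trace_mul_mul_conjTranspose_nonneg (hM : M.PosSemidef) (Q : Matrix ι κ 𝕜) :
    0 ≤ trace (M * (Q * Qᴴ)) := by
  rw [← Matrix.mul_assoc, trace_mul_comm, ← Matrix.mul_assoc]
  exact (hM.conjTranspose_mul_mul_same Q).trace_nonneg

theorem PosSemidef.trace_mul_mul_conjTranspose_eq_zero_iff (hM : M.PosSemidef)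
    (Q : Matrix ι κ 𝕜) : trace (M * (Q * Qᴴ)) = 0 ↔ M * Q = 0 := by
  classical
  obtain ⟨B, rfl⟩ := CStarAlgebra.nonneg_iff_eq_star_mul_self.mp hM.nonneg
  rw [star_eq_conjTranspose, conjTranspose_mul_self_mul_eq_zero, ← Matrix.mul_assoc,
    trace_mul_comm, Matrix.mul_assoc, ← Matrix.mul_assoc Qᴴ,
    ← conjTranspose_mul, trace_conjTranspose_mul_self_eq_zero_iff]

end Trace

section Submatrix

variable {R ι : Type*} [CommRing R] [Fintype ι] [DecidableEq ι] {M : Matrix ι ι R}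
  (p : ι → Prop) [DecidablePred p]

theorem eq_zero_of_mulVec_eq_zero_of_isUnit_submatrix {v : ι → R}
    (hM : IsUnit (M.submatrix (fun i : {i // p i} => (i : ι)) (fun i : {i // p i} => (i : ι))))
    (hMv : M *ᵥ v = 0) (hv : ∀ i, ¬ p i → v i = 0) : v = 0 := by
  have hrestrict :
      M.submatrix (fun i : {i // p i} => (i : ι)) (fun i : {i // p i} => (i : ι)) *ᵥ
        (fun i => v i) = 0 := by
    funext i
    have h := congrFun hMv i
    rw [mulVec, dotProduct, ← Fintype.sum_subtype_add_sum_subtype p] at h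
    rwa [Fintype.sum_eq_zero (fun k : {k // ¬ p k} => M i k * v k)
      (fun k => by rw [hv k k.2, mul_zero]), add_zero] at h
  have hzero := mulVec_injective_of_isUnit hM (hrestrict.trans (mulVec_zero _).symm)
  funext i
  by_cases hi : p i
  · exact congrFun hzero ⟨i, hi⟩
  · exact hv i hi

theorem eq_zero_of_mul_eq_zero_of_isUnit_submatrix {X : Matrix ι ι R}
    (hM : IsUnit (M.submatrix (fun i : {i // p i} => (i : ι)) (fun i : {i // p i} => (i : ι))))
    (hMX : M * X = 0) (hX : X.IsSymm) (hXp : ∀ i j, ¬ p i → ¬ p j → X i j = 0) : X = 0 := by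
  have hcol (j : ι) (hj : ∀ i, ¬ p i → X i j = 0) : (fun i => X i j) = 0 :=
    eq_zero_of_mulVec_eq_zero_of_isUnit_submatrix p hM
      (funext fun i => congrFun (congrFun hMX i) j) hj
  have hcol_not (j : ι) (hj : ¬ p j) : (fun i => X i j) = 0 :=
    hcol j fun i hi => hXp i j hi hj
  ext i j
  refine congrFun (hcol j fun k hk => ?_) i
  rw [← hX.apply]
  exact congrFun (hcol_not k hk) j

end Submatrix

end Matrix

namespace SimpleGraph

variable {V R : Type*} [DecidableEq V] (G : SimpleGraph V) [DecidableRel G.Adj]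
  [CommRing R] [PartialOrder R] (τ : R) {X : Matrix V V R}

theorem adjMatrix_sub_smul_one_apply_mul_apply_nonpos (hdiag : ∀ i, X i i = 0)
    (hadj : ∀ i j, G.Adj i j → X i j ≤ 0) (i j : V) :
    (G.adjMatrix R - τ • 1) i j * X j i ≤ 0 := by
  rcases eq_or_ne i j with rfl | hij
  · simp [hdiag]
  · by_cases h : G.Adj i j
    · simpa [Matrix.one_apply_ne hij, h] using hadj j i h.symm
    · simp [Matrix.one_apply_ne hij, h]

variable [Fintype V] [IsOrderedRing R]

theorem trace_adjMatrix_sub_smul_one_mul_nonpos (hdiag : ∀ i, X i i = 0)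
    (hadj : ∀ i j, G.Adj i j → X i j ≤ 0) :
    trace ((G.adjMatrix R - τ • 1) * X) ≤ 0 :=
  Finset.sum_nonpos fun i _ => Finset.sum_nonpos fun j _ =>
    G.adjMatrix_sub_smul_one_apply_mul_apply_nonpos τ hdiag hadj i j

theorem apply_eq_zero_of_adj_of_trace_adjMatrix_sub_smul_one_mul_eq_zero
    (hdiag : ∀ i, X i i = 0) (hadj : ∀ i j, G.Adj i j → X i j ≤ 0)
    (htrace : trace ((G.adjMatrix R - τ • 1) * X) = 0) {i j : V} (h : G.Adj i j) :
    X i j = 0 := by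
  have hterm := G.adjMatrix_sub_smul_one_apply_mul_apply_nonpos τ hdiag hadj
  have hrow := congrFun ((Fintype.sum_eq_zero_iff_of_nonpos fun i =>
    Finset.sum_nonpos fun j _ => hterm i j).mp htrace) j
  have hji := congrFun ((Fintype.sum_eq_zero_iff_of_nonpos (hterm j)).mp hrow) i
  simpa [Matrix.one_apply_ne h.ne.symm, h.symm] using hji

end SimpleGraph

theorem stmt_9_general {n d : ℕ} (G : SimpleGraph (Fin n)) [DecidableRel G.Adj] (τ : ℝ)
    (hτpsd : (G.adjMatrix ℝ - τ • 1).PosSemidef)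
    (P : Matrix (Fin n) (Fin d) ℝ)
    (hAP : G.adjMatrix ℝ * P = τ • P)
    (C : Finset (Fin n))
    (hclique : ∀ i ∈ C, ∀ j ∈ C, i ≠ j → G.Adj i j)
    (hinv : IsUnit ((G.adjMatrix ℝ - τ • 1).submatrix
        (fun x : {i : Fin n // i ∉ C} => (x : Fin n))
        (fun x : {i : Fin n // i ∉ C} => (x : Fin n)))) :
    ∀ (m : ℕ) (q : Fin n → Fin m → ℝ),
      (∀ i, q i ⬝ᵥ q i = P i ⬝ᵥ P i) →
      (∀ i j, G.Adj i j → q i ⬝ᵥ q j ≤ P i ⬝ᵥ P j) →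
      ∀ i j, q i ⬝ᵥ q j = P i ⬝ᵥ P j := by
  intro m q hdiag hedge
  set M := G.adjMatrix ℝ - τ • 1 with hM
  set Q : Matrix (Fin n) (Fin m) ℝ := of q
  set X := Q * Qᵀ - P * Pᵀ
  have hX (i j) : X i j = q i ⬝ᵥ q j - P i ⬝ᵥ P j := rfl
  have hXdiag (i) : X i i = 0 := by rw [hX, hdiag, sub_self]
  have hXadj (i j) (h : G.Adj i j) : X i j ≤ 0 := by rw [hX]; linarith [hedge i j h]
  have hMP : M * P = 0 := by
    rw [hM, Matrix.sub_mul, hAP, Matrix.smul_mul, Matrix.one_mul, sub_self]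
  have hMQ : M * Q = 0 := by
    have hle := G.trace_adjMatrix_sub_smul_one_mul_nonpos τ hXdiag hXadj
    rw [Matrix.mul_sub, trace_sub, ← Matrix.mul_assoc M P, hMP, Matrix.zero_mul, trace_zero,
      sub_zero, ← conjTranspose_eq_transpose_of_trivial] at hle
    exact (hτpsd.trace_mul_mul_conjTranspose_eq_zero_iff Q).mp
      (hle.antisymm (hτpsd.trace_mul_mul_conjTranspose_nonneg Q))
  have hMX : M * X = 0 := by
    rw [Matrix.mul_sub, ← Matrix.mul_assoc, ← Matrix.mul_assoc, hMQ, hMP, Matrix.zero_mul,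
      Matrix.zero_mul, sub_zero]
  have hXclique (i j) (hi : ¬ i ∉ C) (hj : ¬ j ∉ C) : X i j = 0 := by
    rcases eq_or_ne i j with rfl | hij
    · exact hXdiag i
    · exact G.apply_eq_zero_of_adj_of_trace_adjMatrix_sub_smul_one_mul_eq_zero τ hXdiag hXadj
        (by rw [hMX, trace_zero]) (hclique i (not_not.mp hi) j (not_not.mp hj) hij)
  have hXsymm : X.IsSymm :=
    IsSymm.ext fun i j => by rw [hX, hX, dotProduct_comm (q j), dotProduct_comm (P j)]
  intro i j
  have hX0 := eq_zero_of_mul_eq_zero_of_isUnit_submatrix (· ∉ C) hinv hMX hXsymm hXclique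
  exact sub_eq_zero.mp ((hX i j).symm.trans (congrFun (congrFun hX0 i) j))

theorem stmt_9 {n d : ℕ} (G : SimpleGraph (Fin n)) [DecidableRel G.Adj] (τ : ℝ)
    (hτeig : ∃ v : Fin n → ℝ, v ≠ 0 ∧ (G.adjMatrix ℝ).mulVec v = τ • v)
    (hτpsd : (G.adjMatrix ℝ - τ • 1).PosSemidef)
    (P : Matrix (Fin n) (Fin d) ℝ)
    (hPortho : Pᵀ * P = 1)
    (hAP : G.adjMatrix ℝ * P = τ • P)
    (hspan : ∀ v : Fin n → ℝ, (G.adjMatrix ℝ).mulVec v = τ • v →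
        ∃ w : Fin d → ℝ, P.mulVec w = v)
    (C : Finset (Fin n))
    (hclique : ∀ i ∈ C, ∀ j ∈ C, i ≠ j → G.Adj i j)
    (hinv : IsUnit ((G.adjMatrix ℝ - τ • 1).submatrix
        (fun x : {i : Fin n // i ∉ C} => (x : Fin n))
        (fun x : {i : Fin n // i ∉ C} => (x : Fin n)))) :
    ∀ (m : ℕ) (q : Fin n → Fin m → ℝ),
      (∀ i, q i ⬝ᵥ q i = P i ⬝ᵥ P i) →
      (∀ i j, G.Adj i j → q i ⬝ᵥ q j ≤ P i ⬝ᵥ P j) →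
      ∀ i j, q i ⬝ᵥ q j = P i ⬝ᵥ P j :=
  stmt_9_general G τ hτpsd P hAP C hclique hinv
end

section
/- Let 𝔽 be a finite field with q elements, let n, r be positive integers with n ≥ 2r+1, and let V = 𝔽^n. Let L be the set of 1-dimensional subspaces (lines) of V, and for each k set [k]_q = 1 + q + ⋯ + q^{k−1}. For every r-dimensional subspace S of V define p_S ∈ ℝ^L by (p_S)_ℓ = [r]_q − [n]_q if ℓ ⊆ S and (p_S)_ℓ = [r]_q if ℓ ∩ S = {0}. For a subspace F of V, let 1_F ∈ ℝ^L be the indicator vector of the lines contained in F, let e_ℓ be the standard basis vectors of ℝ^L, let 1 be the all-ones vector, and define P_F = span({p_S : S an r-dimensional subspace of V with S ∩ F = {0}} ∪ {1}) and E_F = span({e_ℓ : ℓ ∈ L, ℓ ∩ F = {0}} ∪ {1_F}). Then for every subspace F of V of dimension at most r, one has P_F = E_F. -/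
/-!
Since `p_S = [r]_q • 1 - [n]_q • 1_S` and `1 = 1_F + ∑_{ℓ ∩ F = 0} e_ℓ`, both sides contain `1`,
and it suffices to show that the indicators `1_S` of the `r`-spaces `S` avoiding `F` span the same
space as the `e_ℓ` with `ℓ` avoiding `F`. One inclusion is `1_S = ∑_{ℓ ⊆ S} e_ℓ`.
For the other, put `ℓ₀` into an `(r+1)`-space `U` avoiding `F` (possible as `n ≥ 2r + 1`).
The number `N_k` of hyperplanes of `U` containing a `k`-dimensional `X ≤ U` depends only on `k`
(they correspond to the hyperplanes of `U / X`). Summing `1_H` over all hyperplanes `H` of `U`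
gives `N_1 • 1_U`, and over those through `ℓ₀` gives `(N_1 - N_2) • e_ℓ₀ + N_2 • 1_U`; finally
`N_2 < N_1` because some hyperplane of `U` contains a second line but not `ℓ₀`.
-/

open Matrix

/-- The set of lines (1-dimensional subspaces) of `𝔽^n`. -/
def QLine (𝔽 : Type) [Field 𝔽] (n : ℕ) : Type :=
  {ℓ : Submodule 𝔽 (Fin n → 𝔽) // Module.finrank 𝔽 ℓ = 1}

open Module Submodule

section Subspaces

variable {K V : Type*} [Field K] [AddCommGroup V] [Module K V]

theorem card_submodule_finrank_congr {W : Type*} [AddCommGroup W] [Module K W]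
    (e : V ≃ₗ[K] W) (p : ℕ → Prop) :
    Nat.card {S : Submodule K V // p (finrank K S)} =
      Nat.card {S : Submodule K W // p (finrank K S)} :=
  Nat.card_congr <| (orderIsoMapComap e).toEquiv.subtypeEquiv fun S => by
    rw [← LinearEquiv.finrank_map_eq e S]
    rfl

theorem card_between_eq_card_ge_comap (X U : Submodule K V) (hXU : X ≤ U) (d : ℕ) :
    Nat.card {S : Submodule K V // X ≤ S ∧ S ≤ U ∧ finrank K S = d} =
      Nat.card {T : Submodule K U // X.comap U.subtype ≤ T ∧ finrank K T = d} := by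
  have hX : X = (X.comap U.subtype).map U.subtype := by
    rw [map_comap_subtype, inf_eq_right.mpr hXU]
  refine (Nat.card_congr ?_).symm
  refine (((MapSubtype.orderIso U).toEquiv.subtypeEquiv
    (q := fun S => X ≤ S.1 ∧ finrank K S.1 = d) fun T => ?_).trans
    (Equiv.subtypeSubtypeEquivSubtypeInter (· ≤ U) fun S => X ≤ S ∧ finrank K S = d)).trans
    (Equiv.subtypeEquivRight fun _ => and_left_comm)
  show _ ↔ X ≤ T.map U.subtype ∧ finrank K (T.map U.subtype) = d
  rw [finrank_map_subtype_eq]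
  conv_rhs => rw [hX, map_le_map_iff_of_injective (injective_subtype U)]

variable [FiniteDimensional K V]

theorem exists_le_le_inf_eq_bot_finrank_eq {A B U : Submodule K V} (hAB : A ⊓ B = ⊥)
    (hAU : A ≤ U) (hBU : B ≤ U) {d : ℕ} (hAd : finrank K A ≤ d)
    (hdU : d + finrank K B ≤ finrank K U) :
    ∃ S : Submodule K V, A ≤ S ∧ S ≤ U ∧ S ⊓ B = ⊥ ∧ finrank K S = d := by
  induction d, hAd using Nat.le_induction with
  | base => exact ⟨A, le_rfl, hAU, hAB, rfl⟩
  | succ d _ ih =>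
    obtain ⟨S, hAS, hSU, hSB, hS⟩ := ih (by omega)
    have hSB_finrank : finrank K ↥(S ⊔ B) = d + finrank K B := by
      have := finrank_sup_add_finrank_inf_eq S B
      rw [hSB, finrank_bot] at this
      omega
    obtain ⟨v, hvU, hv⟩ := SetLike.exists_of_lt <| (sup_le hSU hBU).lt_of_ne fun h => by
      rw [h] at hSB_finrank
      omega
    have hvS : v ∉ S := fun h => hv (mem_sup_left h)
    refine ⟨S ⊔ span K {v}, le_sup_of_le_left hAS,
      sup_le hSU ((span_singleton_le_iff_mem v U).mpr hvU), ?_, ?_⟩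
    · have h := finrank_sup_add_finrank_inf_eq (S ⊔ span K {v}) B
      rw [sup_right_comm, finrank_sup_span_singleton hv, finrank_sup_span_singleton hvS,
        hSB_finrank, hS] at h
      exact finrank_eq_zero.mp (by omega)
    · rw [finrank_sup_span_singleton hvS, hS]

theorem finrank_map_mkQ_add_finrank {X S : Submodule K V} (h : X ≤ S) :
    finrank K (S.map X.mkQ) + finrank K X = finrank K S := by
  have := LinearMap.finrank_range_add_finrank_ker (X.mkQ.domRestrict S)
  rwa [LinearMap.range_domRestrict, LinearMap.ker_domRestrict, ker_mkQ,
    (comapSubtypeEquivOfLe h).finrank_eq] at this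

theorem finrank_comap_mkQ (X : Submodule K V) (R : Submodule K (V ⧸ X)) :
    finrank K (R.comap X.mkQ) = finrank K R + finrank K X := by
  rw [← finrank_map_mkQ_add_finrank (le_comap_mkQ X R),
    map_comap_eq_self (by rw [range_mkQ]; exact le_top)]

theorem card_ge_eq_card_quotient (X : Submodule K V) (d : ℕ) :
    Nat.card {S : Submodule K V // X ≤ S ∧ finrank K S = d} =
      Nat.card {R : Submodule K (V ⧸ X) // finrank K R + finrank K X = d} := by
  refine (Nat.card_congr ?_).symm
  exact ((comapMkQRelIso X).toEquiv.subtypeEquiv fun R => by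
    rw [← finrank_comap_mkQ]
    rfl).trans
    (Equiv.subtypeSubtypeEquivSubtypeInter (X ≤ ·) (finrank K · = d))

theorem card_between_congr {X U X' U' : Submodule K V} (hXU : X ≤ U) (hXU' : X' ≤ U')
    (hX : finrank K X = finrank K X') (hU : finrank K U = finrank K U') (d : ℕ) :
    Nat.card {S : Submodule K V // X ≤ S ∧ S ≤ U ∧ finrank K S = d} =
      Nat.card {S : Submodule K V // X' ≤ S ∧ S ≤ U' ∧ finrank K S = d} := by
  have hX₀ := (comapSubtypeEquivOfLe hXU).finrank_eq
  have hX₀' := (comapSubtypeEquivOfLe hXU').finrank_eq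
  have hQ := finrank_quotient_add_finrank (X.comap U.subtype)
  have hQ' := finrank_quotient_add_finrank (X'.comap U'.subtype)
  rw [card_between_eq_card_ge_comap X U hXU, card_between_eq_card_ge_comap X' U' hXU',
    card_ge_eq_card_quotient, card_ge_eq_card_quotient, hX₀, hX₀', hX]
  exact card_submodule_finrank_congr
    (LinearEquiv.ofFinrankEq (U ⧸ X.comap U.subtype) (U' ⧸ X'.comap U'.subtype) (by omega))
    (· + finrank K X' = d)

end Subspaces

section Span

variable {R M : Type*} [DivisionRing R] [AddCommGroup M] [Module R M]

theorem span_image_smul_sub_union (s : Set M) (v : M) (a : R) {c : R} (hc : c ≠ 0) :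
    span R ((fun x => a • v - c • x) '' s ∪ {v}) = span R (s ∪ {v}) := by
  have hv : v ∈ span R (s ∪ {v}) := subset_span (Or.inr rfl)
  refine le_antisymm (span_le.mpr ?_) (span_le.mpr ?_)
  · rintro _ (⟨x, hx, rfl⟩ | rfl)
    · exact sub_mem (smul_mem _ _ hv) (smul_mem _ _ (subset_span (Or.inl hx)))
    · exact hv
  · rintro x (hx | rfl)
    · have hx' : a • v - c • x ∈ span R ((fun x => a • v - c • x) '' s ∪ {v}) :=
        subset_span (Or.inl ⟨x, hx, rfl⟩)
      have hv' : v ∈ span R ((fun x => a • v - c • x) '' s ∪ {v}) := subset_span (Or.inr rfl)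
      have : x = c⁻¹ • (a • v - (a • v - c • x)) := by
        rw [sub_sub_cancel, smul_smul, inv_mul_cancel₀ hc, one_smul]
      rw [this]
      exact smul_mem _ _ (sub_mem (smul_mem _ _ hv') hx')
    · exact subset_span (Or.inr rfl)

theorem span_union_singleton_eq_of_sub_mem {s : Set M} {v w : M} (h : v - w ∈ span R s) :
    span R (s ∪ {v}) = span R (s ∪ {w}) := by
  rw [span_union, span_union]
  refine le_antisymm (sup_le le_sup_left ?_) (sup_le le_sup_left ?_) <;>
    rw [span_singleton_le_iff_mem]
  · simpa using add_mem (mem_sup_left h) (mem_sup_right (mem_span_singleton_self w))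
  · simpa using sub_mem (mem_sup_right (mem_span_singleton_self v)) (mem_sup_left h)

theorem indicator_mem_span_single {ι : Type*} [Fintype ι] [DecidableEq ι] {p q : ι → Prop}
    [DecidablePred p] (hpq : ∀ i, p i → q i) :
    (fun i => if p i then (1 : R) else 0) ∈
      span R {f | ∃ j, q j ∧ f = fun i => if i = j then (1 : R) else 0} := by
  have : (fun i => if p i then (1 : R) else 0) =
      ∑ j ∈ Finset.univ.filter p, fun i => if i = j then (1 : R) else 0 := by
    funext i
    simp [Finset.sum_apply]
  rw [this]
  refine sum_mem fun j hj => subset_span ⟨j, hpq j ?_, rfl⟩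
  simpa using hj

end Span

section FiniteField

variable {K V : Type*} [Field K] [AddCommGroup V] [Module K V] [Finite V]

instance Submodule.finite_of_finite : Finite (Submodule K V) :=
  Finite.of_injective _ SetLike.coe_injective

noncomputable instance Submodule.fintypeOfFinite : Fintype (Submodule K V) :=
  Fintype.ofFinite _

open scoped Classical in
noncomputable def subspacesBetween (X U : Submodule K V) (d : ℕ) : Finset (Submodule K V) :=
  {S | X ≤ S ∧ S ≤ U ∧ finrank K S = d}

theorem card_subspacesBetween_sup_eq_zero {X Y U : Submodule K V} (h : ¬ Y ≤ U) (d : ℕ) :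
    (subspacesBetween (X ⊔ Y) U d).card = 0 := by
  simp only [subspacesBetween, Finset.card_eq_zero, Finset.filter_eq_empty_iff, sup_le_iff]
  exact fun S _ hS => h (hS.1.2.trans hS.2.1)

theorem card_subspacesBetween_congr [FiniteDimensional K V] {X U X' U' : Submodule K V}
    (hXU : X ≤ U) (hXU' : X' ≤ U') (hX : finrank K X = finrank K X')
    (hU : finrank K U = finrank K U') (d : ℕ) :
    (subspacesBetween X U d).card = (subspacesBetween X' U' d).card := by
  classical
  rw [subspacesBetween, subspacesBetween, ← Fintype.card_subtype, ← Fintype.card_subtype,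
    ← Nat.card_eq_fintype_card, ← Nat.card_eq_fintype_card]
  exact card_between_congr hXU hXU' hX hU d

end FiniteField

noncomputable instance QLine.instFintype (𝔽 : Type) [Field 𝔽] [Fintype 𝔽] (n : ℕ) :
    Fintype (QLine 𝔽 n) :=
  Fintype.ofFinite {ℓ : Submodule 𝔽 (Fin n → 𝔽) // finrank 𝔽 ℓ = 1}

namespace QLine

variable {𝔽 : Type} [Field 𝔽] {n : ℕ}

theorem le_iff_eq {ℓ ℓ' : QLine 𝔽 n} : ℓ.1 ≤ ℓ'.1 ↔ ℓ = ℓ' :=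
  ⟨fun h => Subtype.ext (eq_of_le_of_finrank_le h (by rw [ℓ.2, ℓ'.2])), fun h => h ▸ le_rfl⟩

theorem ne_bot (ℓ : QLine 𝔽 n) : ℓ.1 ≠ ⊥ := fun h => by
  have := ℓ.2
  rw [h, finrank_bot] at this
  exact zero_ne_one this

theorem le_or_inf_eq_bot (ℓ : QLine 𝔽 n) (W : Submodule 𝔽 (Fin n → 𝔽)) :
    ℓ.1 ≤ W ∨ ℓ.1 ⊓ W = ⊥ := by
  refine or_iff_not_imp_right.mpr fun h => ?_
  have hpos : 0 < finrank 𝔽 ↥(ℓ.1 ⊓ W) := finrank_pos_iff.mpr (nontrivial_iff_ne_bot.mpr h)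
  rw [← eq_of_le_of_finrank_le (inf_le_left : ℓ.1 ⊓ W ≤ ℓ.1) (by rw [ℓ.2]; omega)]
  exact inf_le_right

theorem finrank_sup {ℓ ℓ' : QLine 𝔽 n} (h : ℓ ≠ ℓ') : finrank 𝔽 ↥(ℓ.1 ⊔ ℓ'.1) = 2 := by
  have hinf := (le_or_inf_eq_bot ℓ ℓ'.1).resolve_left (mt le_iff_eq.mp h)
  have := finrank_sup_add_finrank_inf_eq ℓ.1 ℓ'.1
  rw [hinf, ℓ.2, ℓ'.2, finrank_bot] at this
  exact this

end QLine

section Incidence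

variable {𝔽 : Type} [Field 𝔽] {n : ℕ}

open scoped Classical in
noncomputable def lineIndicator (W : Submodule 𝔽 (Fin n → 𝔽)) : QLine 𝔽 n → ℝ :=
  fun ℓ => if ℓ.1 ≤ W then 1 else 0

open scoped Classical in
theorem lineIndicator_line (ℓ₀ : QLine 𝔽 n) :
    lineIndicator ℓ₀.1 = fun ℓ => if ℓ = ℓ₀ then 1 else 0 := by
  funext ℓ
  simp only [lineIndicator, QLine.le_iff_eq]

open scoped Classical in
theorem setOf_ite_le_eq_image (F : Submodule 𝔽 (Fin n → 𝔽)) (r : ℕ) (a c : ℝ) :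
    {f : QLine 𝔽 n → ℝ | ∃ S : Submodule 𝔽 (Fin n → 𝔽), finrank 𝔽 S = r ∧ S ⊓ F = ⊥ ∧
      f = fun ℓ => if ℓ.1 ≤ S then a - c else a} =
      (fun x => a • (fun _ => 1) - c • x) ''
        {f | ∃ S : Submodule 𝔽 (Fin n → 𝔽), finrank 𝔽 S = r ∧ S ⊓ F = ⊥ ∧ f = lineIndicator S} := by
  have hS : ∀ S : Submodule 𝔽 (Fin n → 𝔽),
      a • (fun _ => 1) - c • lineIndicator S = fun ℓ : QLine 𝔽 n => if ℓ.1 ≤ S then a - c else a :=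
    fun S => by
      funext ℓ
      simp only [lineIndicator, Pi.sub_apply, Pi.smul_apply, smul_eq_mul]
      split_ifs <;> ring
  ext f
  constructor
  · rintro ⟨S, hSr, hSF, rfl⟩
    exact ⟨_, ⟨S, hSr, hSF, rfl⟩, hS S⟩
  · rintro ⟨_, ⟨S, hSr, hSF, rfl⟩, rfl⟩
    exact ⟨S, hSr, hSF, hS S⟩

variable [Fintype 𝔽]

theorem sum_lineIndicator_subspacesBetween_apply (X U : Submodule 𝔽 (Fin n → 𝔽)) (d : ℕ)
    (ℓ : QLine 𝔽 n) :
    (∑ S ∈ subspacesBetween X U d, lineIndicator S) ℓ =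
      (subspacesBetween (X ⊔ ℓ.1) U d).card := by
  classical
  simp only [Finset.sum_apply, lineIndicator, Finset.sum_boole, subspacesBetween,
    Finset.filter_filter, sup_le_iff]
  congr 3
  ext S
  tauto

theorem sum_lineIndicator_subspacesBetween_bot {U : Submodule 𝔽 (Fin n → 𝔽)} {r : ℕ}
    {ℓ₁ : QLine 𝔽 n} (hℓ₁ : ℓ₁.1 ≤ U) :
    ∑ S ∈ subspacesBetween ⊥ U r, lineIndicator S =
      ((subspacesBetween ℓ₁.1 U r).card : ℝ) • lineIndicator U := by
  funext ℓ
  rw [sum_lineIndicator_subspacesBetween_apply, bot_sup_eq]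
  simp only [Pi.smul_apply, lineIndicator, smul_eq_mul, mul_ite, mul_one, mul_zero]
  split_ifs with hℓ
  · rw [card_subspacesBetween_congr hℓ hℓ₁ (by rw [ℓ.2, ℓ₁.2]) rfl]
  · rw [← bot_sup_eq ℓ.1, card_subspacesBetween_sup_eq_zero hℓ, Nat.cast_zero]

theorem sum_lineIndicator_subspacesBetween_line {U : Submodule 𝔽 (Fin n → 𝔽)} {r : ℕ}
    {ℓ₀ ℓ₁ : QLine 𝔽 n} (h : ℓ₀ ≠ ℓ₁) (hℓ₀ : ℓ₀.1 ≤ U) (hℓ₁ : ℓ₁.1 ≤ U) :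
    ∑ S ∈ subspacesBetween ℓ₀.1 U r, lineIndicator S =
      (((subspacesBetween ℓ₁.1 U r).card : ℝ) - (subspacesBetween (ℓ₀.1 ⊔ ℓ₁.1) U r).card) •
          lineIndicator ℓ₀.1 +
        ((subspacesBetween (ℓ₀.1 ⊔ ℓ₁.1) U r).card : ℝ) • lineIndicator U := by
  funext ℓ
  rw [sum_lineIndicator_subspacesBetween_apply]
  simp only [Pi.add_apply, Pi.smul_apply, lineIndicator, smul_eq_mul, mul_ite, mul_one, mul_zero]
  by_cases h₀ : ℓ = ℓ₀
  · subst h₀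
    rw [sup_idem, if_pos le_rfl, if_pos hℓ₀,
      card_subspacesBetween_congr hℓ₀ hℓ₁ (by rw [ℓ.2, ℓ₁.2]) rfl]
    ring
  · rw [if_neg (mt QLine.le_iff_eq.mp h₀)]
    split_ifs with hℓ
    · rw [card_subspacesBetween_congr (sup_le hℓ₀ hℓ) (sup_le hℓ₀ hℓ₁)
        (by rw [QLine.finrank_sup (Ne.symm h₀), QLine.finrank_sup h]) rfl]
      ring
    · rw [card_subspacesBetween_sup_eq_zero hℓ, Nat.cast_zero, zero_add]

theorem lineIndicator_mem_span_hyperplanes {U : Submodule 𝔽 (Fin n → 𝔽)} {r : ℕ} (hr : 1 ≤ r)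
    (hU : finrank 𝔽 U = r + 1) {ℓ₀ : QLine 𝔽 n} (hℓ₀ : ℓ₀.1 ≤ U) :
    lineIndicator ℓ₀.1 ∈ span ℝ (lineIndicator '' {S | S ≤ U ∧ finrank 𝔽 S = r}) := by
  obtain ⟨L, -, hLU, hLℓ₀, hL⟩ := exists_le_le_inf_eq_bot_finrank_eq (A := ⊥) (d := 1)
    (bot_inf_eq _) bot_le hℓ₀ (by simp) (by rw [ℓ₀.2]; omega)
  let ℓ₁ : QLine 𝔽 n := ⟨L, hL⟩
  have hℓ₀₁ : ℓ₀ ≠ ℓ₁ := fun h => by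
    have h' : ℓ₀.1 = L := congrArg Subtype.val h
    rw [h', inf_idem] at hLℓ₀
    exact ℓ₁.ne_bot hLℓ₀
  obtain ⟨H, hLH, hHU, hHℓ₀, hH⟩ := exists_le_le_inf_eq_bot_finrank_eq (d := r)
    hLℓ₀ hLU hℓ₀ (by rw [hL]; omega) (by rw [ℓ₀.2, hU])
  set a := (subspacesBetween ℓ₁.1 U r).card
  set b := (subspacesBetween (ℓ₀.1 ⊔ ℓ₁.1) U r).card
  have hba : b < a := by
    refine Finset.card_lt_card ((Finset.ssubset_iff_of_subset ?_).mpr ⟨H, ?_, ?_⟩) <;>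
      simp only [subspacesBetween, Finset.subset_iff, Finset.mem_filter, Finset.mem_univ,
        true_and, sup_le_iff]
    · exact fun S hS => ⟨hS.1.2, hS.2⟩
    · exact ⟨hLH, hHU, hH⟩
    · rintro ⟨⟨hℓ₀H, -⟩, -⟩
      exact ℓ₀.ne_bot (by rwa [inf_eq_right.mpr hℓ₀H] at hHℓ₀)
  have hσ : ∀ X, ∑ S ∈ subspacesBetween X U r, lineIndicator S ∈
      span ℝ (lineIndicator '' {S | S ≤ U ∧ finrank 𝔽 S = r}) := fun X =>
    sum_mem fun S hS => subset_span ⟨S, by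
      simp only [subspacesBetween, Finset.mem_filter] at hS
      exact ⟨hS.2.2.1, hS.2.2.2⟩, rfl⟩
  have key : lineIndicator ℓ₀.1 = ((a : ℝ) - b)⁻¹ •
      (∑ S ∈ subspacesBetween ℓ₀.1 U r, lineIndicator S -
        ((b : ℝ) / a) • ∑ S ∈ subspacesBetween ⊥ U r, lineIndicator S) := by
    have hab : (a : ℝ) - b ≠ 0 := sub_ne_zero.mpr (by exact_mod_cast hba.ne')
    have ha : (a : ℝ) ≠ 0 := by exact_mod_cast (hba.trans_le' (Nat.zero_le b)).ne'
    rw [sum_lineIndicator_subspacesBetween_line hℓ₀₁ hℓ₀ hLU,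
      sum_lineIndicator_subspacesBetween_bot (ℓ₁ := ℓ₁) hLU, smul_smul, div_mul_cancel₀ _ ha,
      add_sub_cancel_right, smul_smul, inv_mul_cancel₀ hab, one_smul]
  rw [key]
  exact smul_mem _ _ (sub_mem (hσ _) (smul_mem _ _ (hσ _)))

end Incidence

section AvoidingSubspace

variable {𝔽 : Type} [Field 𝔽] [Fintype 𝔽] {n : ℕ} (F : Submodule 𝔽 (Fin n → 𝔽))

open scoped Classical in
theorem one_sub_indicator_mem_span_single :
    (fun _ => (1 : ℝ)) - (fun ℓ : QLine 𝔽 n => if ℓ.1 ≤ F then (1 : ℝ) else 0) ∈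
      span ℝ {f | ∃ ℓ₀ : QLine 𝔽 n, ℓ₀.1 ⊓ F = ⊥ ∧ f = fun ℓ => if ℓ = ℓ₀ then (1 : ℝ) else 0} := by
  have h : (fun _ => (1 : ℝ)) - (fun ℓ : QLine 𝔽 n => if ℓ.1 ≤ F then (1 : ℝ) else 0) =
      fun ℓ => if ¬ ℓ.1 ≤ F then 1 else 0 := by
    funext ℓ
    split_ifs <;> simp_all
  rw [h]
  exact indicator_mem_span_single fun ℓ hℓ => (ℓ.le_or_inf_eq_bot F).resolve_left hℓ

open scoped Classical in
theorem span_lineIndicator_eq_span_single {r : ℕ} (hr : 1 ≤ r) (hn : 2 * r + 1 ≤ n)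
    (hF : finrank 𝔽 F ≤ r) :
    span ℝ {f | ∃ S : Submodule 𝔽 (Fin n → 𝔽), finrank 𝔽 S = r ∧ S ⊓ F = ⊥ ∧ f = lineIndicator S} =
      span ℝ {f | ∃ ℓ₀ : QLine 𝔽 n, ℓ₀.1 ⊓ F = ⊥ ∧ f = fun ℓ => if ℓ = ℓ₀ then (1 : ℝ) else 0} := by
  refine le_antisymm (span_le.mpr ?_) (span_le.mpr ?_)
  · rintro _ ⟨S, -, hSF, rfl⟩
    exact indicator_mem_span_single fun ℓ h => le_bot_iff.mp (hSF ▸ inf_le_inf_right F h)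
  · rintro _ ⟨ℓ₀, hℓ₀F, rfl⟩
    obtain ⟨U, hℓ₀U, -, hUF, hU⟩ := exists_le_le_inf_eq_bot_finrank_eq (d := r + 1) hℓ₀F le_top
      le_top (by rw [ℓ₀.2]; omega) (by rw [finrank_top, finrank_fin_fun]; omega)
    rw [← lineIndicator_line]
    refine span_mono ?_ (lineIndicator_mem_span_hyperplanes hr hU hℓ₀U)
    rintro _ ⟨S, ⟨hSU, hSr⟩, rfl⟩
    exact ⟨S, hSr, le_bot_iff.mp (hUF ▸ inf_le_inf_right F hSU), rfl⟩

end AvoidingSubspace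

open scoped Classical in
theorem stmt_11_general (𝔽 : Type) [Field 𝔽] [Fintype 𝔽] (q n r : ℕ)
    (hr : 1 ≤ r) (hn : 2 * r + 1 ≤ n)
    (F : Submodule 𝔽 (Fin n → 𝔽)) (hF : Module.finrank 𝔽 F ≤ r) :
    Submodule.span ℝ
      ({f : QLine 𝔽 n → ℝ |
          ∃ S : Submodule 𝔽 (Fin n → 𝔽), Module.finrank 𝔽 S = r ∧ S ⊓ F = ⊥ ∧
            f = fun ℓ : QLine 𝔽 n => if ℓ.1 ≤ S
                then (∑ i ∈ Finset.range r, (q : ℝ) ^ i) - (∑ i ∈ Finset.range n, (q : ℝ) ^ i)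
                else (∑ i ∈ Finset.range r, (q : ℝ) ^ i)}
        ∪ {fun _ : QLine 𝔽 n => (1 : ℝ)})
    =
    Submodule.span ℝ
      ({f : QLine 𝔽 n → ℝ |
          ∃ ℓ₀ : QLine 𝔽 n, ℓ₀.1 ⊓ F = ⊥ ∧
            f = fun ℓ : QLine 𝔽 n => if ℓ = ℓ₀ then (1 : ℝ) else 0}
        ∪ {fun ℓ : QLine 𝔽 n => if ℓ.1 ≤ F then (1 : ℝ) else 0}) := by
  have hc : ∑ i ∈ Finset.range n, (q : ℝ) ^ i ≠ 0 := (Finset.sum_pos' (fun i _ => by positivity)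
    ⟨0, Finset.mem_range.mpr (by omega), by simp⟩).ne'
  rw [setOf_ite_le_eq_image, span_image_smul_sub_union _ _ _ hc,
    ← span_union_singleton_eq_of_sub_mem (one_sub_indicator_mem_span_single F), span_union,
    span_union, span_lineIndicator_eq_span_single F hr hn hF]

open scoped Classical in
theorem stmt_11 (𝔽 : Type) [Field 𝔽] [Fintype 𝔽] (q n r : ℕ)
    (hcard : Fintype.card 𝔽 = q) (hr : 1 ≤ r) (hn : 2 * r + 1 ≤ n)
    (F : Submodule 𝔽 (Fin n → 𝔽)) (hF : Module.finrank 𝔽 F ≤ r) :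
    Submodule.span ℝ
      ({f : QLine 𝔽 n → ℝ |
          ∃ S : Submodule 𝔽 (Fin n → 𝔽), Module.finrank 𝔽 S = r ∧ S ⊓ F = ⊥ ∧
            f = fun ℓ : QLine 𝔽 n => if ℓ.1 ≤ S
                then (∑ i ∈ Finset.range r, (q : ℝ) ^ i) - (∑ i ∈ Finset.range n, (q : ℝ) ^ i)
                else (∑ i ∈ Finset.range r, (q : ℝ) ^ i)}
        ∪ {fun _ : QLine 𝔽 n => (1 : ℝ)})
    =
    Submodule.span ℝ
      ({f : QLine 𝔽 n → ℝ |
          ∃ ℓ₀ : QLine 𝔽 n, ℓ₀.1 ⊓ F = ⊥ ∧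
            f = fun ℓ : QLine 𝔽 n => if ℓ = ℓ₀ then (1 : ℝ) else 0}
        ∪ {fun ℓ : QLine 𝔽 n => if ℓ.1 ≤ F then (1 : ℝ) else 0}) :=
  stmt_11_general 𝔽 q n r hr hn F hF
end

section
/- Let G be a 1-walk-regular simple graph on vertex set Fin n with adjacency matrix A: there exist sequences of reals (a_k) and (b_k) such that for all k ∈ ℕ, (A^k)_{ii} = a_k for every vertex i and (A^k)_{ij} = b_k for every edge ij. Assume G is r-regular with r ≥ 1 (in particular G has an edge). Let τ be the least eigenvalue of A and let P be an n×d matrix with PᵀP = I_d, AP = τP, and every v with Av = τv lying in the column space of P; let p_1,…,p_n be the rows of P. Then for every m and every q : Fin n → ℝ^m, the following are equivalent: (1) ⟨q_i,q_i⟩ = 1 for all i and ⟨q_i,q_j⟩ ≤ τ/r for all edges ij (i.e., q is an optimal vector coloring of G); (2) there exists a symmetric d×d real matrix R with p_iᵀ R p_j = 0 whenever i = j or i ∼ j, such that Gram(q) = (n/d)·(P·Pᵀ + P·R·Pᵀ). -/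
/-!
Let `E = P Pᵀ`, the orthogonal projection onto the `τ`-eigenspace of `A`. Since `A` is symmetric,
`E` is a polynomial in `A`, so by 1-walk-regularity `E` is constant on the diagonal and constant on
edges; the traces of `E` and of `E A = τ E` identify these constants as `d/n` and `(d/n)(τ/r)`.

If `q` is a unit-vector coloring with `⟨q_i, q_j⟩ ≤ τ/r` on edges, its Gram matrix `M` has
`tr (M (A - τ I)) ≤ n τ - n τ = 0`. Both factors are positive semidefinite, so `M (A - τ I) = 0`:
the columns of `M` are `τ`-eigenvectors, `M = E M E`, and `R = (d/n) Pᵀ M P - I` does the job.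
Conversely `(n/d) (E + P R Pᵀ)` agrees with `(n/d) E` on the diagonal and on edges.
-/

open Matrix Polynomial

namespace Matrix

section Polynomial

variable {V κ R : Type*} [Fintype V] [DecidableEq V] [CommRing R]

theorem aeval_mul_of_mul_eq_smul {A : Matrix V V R} {B : Matrix V κ R} {t : R}
    (h : A * B = t • B) (p : R[X]) : aeval A p * B = p.eval t • B := by
  have hpow : ∀ k : ℕ, A ^ k * B = t ^ k • B := by
    intro k
    induction k with
    | zero => simp
    | succ k ih => rw [pow_succ', Matrix.mul_assoc, ih, Matrix.mul_smul, h, smul_smul, pow_succ]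
  induction p using Polynomial.induction_on' with
  | add p q hp hq => rw [map_add, Matrix.add_mul, hp, hq, eval_add, add_smul]
  | monomial k c =>
    rw [aeval_monomial, eval_monomial, ← Algebra.smul_def, Matrix.smul_mul, hpow, smul_smul]

theorem aeval_apply_of_pow_apply {A : Matrix V V R} {i j : V} {c : ℕ → R}
    (h : ∀ k, (A ^ k) i j = c k) (p : R[X]) :
    aeval A p i j = ∑ k ∈ Finset.range (p.natDegree + 1), p.coeff k * c k := by
  simp [aeval_eq_sum_range, Matrix.sum_apply, h]

theorem IsHermitian.aeval_eq_zero_of_eval_eq_zero {A : Matrix V V ℝ} (hA : A.IsHermitian)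
    {p : ℝ[X]} (hp : ∀ x ∈ spectrum ℝ A, p.eval x = 0) : aeval A p = 0 := by
  rw [← cfc_polynomial p A hA.isSelfAdjoint, ← cfc_zero ℝ A]
  exact cfc_congr hp

theorem IsHermitian.isSymm_aeval {A : Matrix V V ℝ} (hA : A.IsHermitian) (p : ℝ[X]) :
    (aeval A p).IsSymm := by
  rw [← cfc_polynomial p A hA.isSelfAdjoint, ← isHermitian_iff_isSymm]
  exact cfc_predicate (fun x => p.eval x) A

end Polynomial

theorem mul_mul_transpose_apply_s18 {ι ι' κ R : Type*} [Fintype κ] [CommRing R] (P : Matrix ι κ R)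
    (M : Matrix κ κ R) (Q : Matrix ι' κ R) (i : ι) (j : ι') :
    (P * M * Qᵀ) i j = P i ⬝ᵥ M *ᵥ Q j := by
  rw [dotProduct_mulVec]; rfl

open scoped ComplexOrder in
theorem PosSemidef.mul_eq_zero_of_trace_le_zero {V m 𝕜 : Type*} [Fintype V] [Fintype m]
    [RCLike 𝕜] {S : Matrix V V 𝕜} (hS : S.PosSemidef) {Q : Matrix V m 𝕜}
    (h : trace (Qᴴ * S * Q) ≤ 0) : S * Q = 0 := by
  have hQSQ : (Qᴴ * S * Q).PosSemidef := hS.conjTranspose_mul_mul_same Q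
  have h0 : Qᴴ * S * Q = 0 := hQSQ.trace_eq_zero_iff.mp (h.antisymm hQSQ.trace_nonneg)
  ext i j
  have hj : star (Qᵀ j) ⬝ᵥ S *ᵥ Qᵀ j = 0 := by
    have := mul_mul_transpose_apply_s18 Qᴴ S Qᵀ j j
    rwa [transpose_transpose, h0, zero_apply, eq_comm] at this
  simpa [mulVec, dotProduct, mul_apply] using congrFun ((hS.dotProduct_mulVec_zero_iff _).mp hj) i

section Eigenprojection

variable {V κ m : Type*} [Fintype V] [Fintype κ] [DecidableEq κ]
  {A : Matrix V V ℝ} {τ : ℝ} {P : Matrix V κ ℝ}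

theorem mul_transpose_mul_of_mul_eq_smul (hP : Pᵀ * P = 1)
    (hspan : ∀ v, A *ᵥ v = τ • v → ∃ w, P *ᵥ w = v) {B : Matrix V m ℝ} (hB : A * B = τ • B) :
    P * Pᵀ * B = B := by
  have hcol : ∀ j, A *ᵥ Bᵀ j = τ • Bᵀ j := fun j => by
    ext i; simpa [mul_apply, mulVec, dotProduct] using congrFun (congrFun hB i) j
  choose W hW using fun j => hspan _ (hcol j)
  have hB : B = P * (of W)ᵀ := by
    ext i j; simpa [mul_apply, mulVec, dotProduct] using (congrFun (hW j) i).symm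
  rw [hB, ← Matrix.mul_assoc, Matrix.mul_assoc P, hP, Matrix.mul_one]

theorem mul_mul_transpose_mul_mul_transpose_of_mul_eq_smul (hP : Pᵀ * P = 1)
    (hspan : ∀ v, A *ᵥ v = τ • v → ∃ w, P *ᵥ w = v) {M : Matrix V V ℝ} (hM : M.IsSymm)
    (hAM : A * M = τ • M) : P * (Pᵀ * M * P) * Pᵀ = M := by
  have hEM : P * Pᵀ * M = M := mul_transpose_mul_of_mul_eq_smul hP hspan hAM
  have hME : M * (P * Pᵀ) = M := by
    simpa [transpose_mul, hM.eq] using congrArg transpose hEM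
  calc P * (Pᵀ * M * P) * Pᵀ = P * Pᵀ * M * (P * Pᵀ) := by simp only [Matrix.mul_assoc]
    _ = M := by rw [hEM, hME]

theorem IsHermitian.exists_aeval_eq_mul_transpose [DecidableEq V] (hA : A.IsHermitian)
    (hP : Pᵀ * P = 1) (hAP : A * P = τ • P) (hspan : ∀ v, A *ᵥ v = τ • v → ∃ w, P *ᵥ w = v) :
    ∃ p : ℝ[X], aeval A p = P * Pᵀ := by
  -- `p` is `1` at `τ` and vanishes on the rest of the spectrum.
  let p : ℝ[X] := ∏ μ ∈ (spectrum ℝ A).toFinite.toFinset.erase τ, C (τ - μ)⁻¹ * (X - C μ)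
  have hpτ : p.eval τ = 1 := by
    rw [eval_prod]
    refine Finset.prod_eq_one fun μ hμ => ?_
    have : τ - μ ≠ 0 := sub_ne_zero.mpr (Finset.ne_of_mem_erase hμ).symm
    simp [inv_mul_cancel₀ this]
  have hAp : A * aeval A p = τ • aeval A p := by
    have h0 : aeval A ((X - C τ) * p) = 0 := hA.aeval_eq_zero_of_eval_eq_zero fun x hx => by
      rcases eq_or_ne x τ with rfl | hxτ
      · simp
      · rw [eval_mul, eval_prod, Finset.prod_eq_zero (i := x) (by simpa [hxτ] using hx) (by simp),
          mul_zero]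
    rwa [map_mul, map_sub, aeval_X, aeval_C, Algebra.algebraMap_eq_smul_one, sub_mul,
      smul_mul, Matrix.one_mul, sub_eq_zero] at h0
  refine ⟨p, ?_⟩
  calc aeval A p = P * Pᵀ * aeval A p := (mul_transpose_mul_of_mul_eq_smul hP hspan hAp).symm
    _ = (aeval A p * (P * Pᵀ))ᵀ := by
      rw [transpose_mul, (hA.isSymm_aeval p).eq, transpose_mul, transpose_transpose]
    _ = P * Pᵀ := by
      rw [← Matrix.mul_assoc, aeval_mul_of_mul_eq_smul hAP, hpτ, one_smul, transpose_mul,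
        transpose_transpose]

end Eigenprojection

end Matrix

namespace SimpleGraph

theorem apply_eq_of_eq_inv_smul_add {V κ : Type*} [Fintype κ] {G : SimpleGraph V} {r : ℕ}
    {τ c : ℝ} (hc : c ≠ 0) {P : Matrix V κ ℝ} (hEdiag : ∀ i, (P * Pᵀ) i i = c)
    (hEadj : ∀ i j, G.Adj i j → (P * Pᵀ) i j = c * (τ / r)) {R : Matrix κ κ ℝ}
    (hR : ∀ i j, (i = j ∨ G.Adj i j) → P i ⬝ᵥ R *ᵥ P j = 0) {M : Matrix V V ℝ}
    (hM : M = c⁻¹ • (P * Pᵀ + P * R * Pᵀ)) :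
    (∀ i, M i i = 1) ∧ ∀ i j, G.Adj i j → M i j = τ / r := by
  have hMij : ∀ i j, (i = j ∨ G.Adj i j) → M i j = c⁻¹ * (P * Pᵀ) i j := fun i j hij => by
    rw [hM, Matrix.smul_apply, Matrix.add_apply, mul_mul_transpose_apply_s18, hR i j hij, add_zero,
      smul_eq_mul]
  refine ⟨fun i => ?_, fun i j hij => ?_⟩
  · rw [hMij i i (.inl rfl), hEdiag, inv_mul_cancel₀ hc]
  · rw [hMij i j (.inr hij), hEadj i j hij, inv_mul_cancel_left₀ hc]

variable {V : Type*} [Fintype V] {G : SimpleGraph V} [DecidableRel G.Adj] {r : ℕ} {τ : ℝ}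

theorem IsRegularOfDegree.sum_neighborFinset_of_adj (hreg : G.IsRegularOfDegree r) {f : V → ℝ}
    {i : V} {c : ℝ} (hf : ∀ j, G.Adj i j → f j = c) : ∑ j ∈ G.neighborFinset i, f j = r * c := by
  rw [Finset.sum_congr rfl fun j hj => hf j ((G.mem_neighborFinset i j).mp hj), Finset.sum_const,
    card_neighborFinset_eq_degree, hreg i, nsmul_eq_mul]

theorem IsRegularOfDegree.ne_zero_of_adj (hreg : G.IsRegularOfDegree r) {i j : V}
    (hij : G.Adj i j) : r ≠ 0 := by
  rw [← hreg i]; exact ((G.degree_pos_iff_exists_adj i).mpr ⟨j, hij⟩).ne'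

theorem trace_mul_adjMatrix (B : Matrix V V ℝ) :
    trace (B * G.adjMatrix ℝ) = ∑ i, ∑ j ∈ G.neighborFinset i, B i j := by
  simp [trace]

theorem apply_eq_of_adjMatrix_mul_eq_smul (hreg : G.IsRegularOfDegree r) {M : Matrix V V ℝ}
    (hAM : G.adjMatrix ℝ * M = τ • M) (hdiag : ∀ i, M i i = 1)
    (hadj : ∀ i j, G.Adj i j → M i j ≤ τ / r) {i j : V} (hij : G.Adj i j) : M i j = τ / r := by
  have hr : (r : ℝ) ≠ 0 := Nat.cast_ne_zero.mpr (hreg.ne_zero_of_adj hij)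
  -- Column `j` of `A M = τ M` sums `r` entries, each at most `τ / r`, to `τ`.
  have hsum : ∑ u ∈ G.neighborFinset j, M u j = ∑ u ∈ G.neighborFinset j, τ / r := by
    have := congrFun (congrFun hAM j) j
    rw [adjMatrix_mul_apply] at this
    rw [this, Finset.sum_const, card_neighborFinset_eq_degree, hreg j]
    simp [hdiag]; field_simp
  refine (Finset.sum_eq_sum_iff_of_le fun u hu => ?_).mp hsum i
    ((G.mem_neighborFinset j i).mpr hij.symm)
  exact hadj u j ((G.mem_neighborFinset j u).mp hu).symm

variable [DecidableEq V]

theorem adjMatrix_mul_gram_eq_smul {m : Type*} [Fintype m] (hreg : G.IsRegularOfDegree r)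
    (hr : r ≠ 0) (hτ : (G.adjMatrix ℝ - τ • 1).PosSemidef) {Q : Matrix V m ℝ}
    (hdiag : ∀ i, (Q * Qᵀ) i i = 1) (hadj : ∀ i j, G.Adj i j → (Q * Qᵀ) i j ≤ τ / r) :
    G.adjMatrix ℝ * (Q * Qᵀ) = τ • (Q * Qᵀ) := by
  have hrow : ∀ i, ∑ j ∈ G.neighborFinset i, (Q * Qᵀ) i j ≤ τ := fun i => by
    refine (Finset.sum_le_card_nsmul _ _ _ fun j hj =>
      hadj i j ((G.mem_neighborFinset i j).mp hj)).trans_eq ?_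
    rw [card_neighborFinset_eq_degree, hreg i, nsmul_eq_mul]; field_simp
  have htrace : trace (Qᴴ * (G.adjMatrix ℝ - τ • 1) * Q) ≤ 0 :=
    calc trace (Qᴴ * (G.adjMatrix ℝ - τ • 1) * Q)
        = ∑ i, ∑ j ∈ G.neighborFinset i, (Q * Qᵀ) i j - ∑ _i : V, τ := by
          rw [conjTranspose_eq_transpose_of_trivial, trace_mul_cycle, Matrix.mul_sub, trace_sub,
            trace_mul_adjMatrix, Matrix.mul_smul, Matrix.mul_one, trace_smul]
          simp [trace, hdiag, mul_comm]
      _ ≤ 0 := sub_nonpos.mpr (Finset.sum_le_sum fun i _ => hrow i)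
  have hSM : (G.adjMatrix ℝ - τ • 1) * (Q * Qᵀ) = 0 := by
    rw [← Matrix.mul_assoc, hτ.mul_eq_zero_of_trace_le_zero htrace, Matrix.zero_mul]
  rwa [Matrix.sub_mul, smul_mul, Matrix.one_mul, sub_eq_zero] at hSM

variable {κ : Type*} [Fintype κ] [DecidableEq κ] {P : Matrix V κ ℝ}

theorem mul_transpose_apply_of_walkRegular {a b : ℕ → ℝ}
    (hwalk1 : ∀ k i, (G.adjMatrix ℝ ^ k) i i = a k)
    (hwalk2 : ∀ k i j, G.Adj i j → (G.adjMatrix ℝ ^ k) i j = b k)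
    (hreg : G.IsRegularOfDegree r) (hP : Pᵀ * P = 1) (hAP : G.adjMatrix ℝ * P = τ • P)
    (hspan : ∀ v, G.adjMatrix ℝ *ᵥ v = τ • v → ∃ w, P *ᵥ w = v) :
    (∀ i, (P * Pᵀ) i i = Fintype.card κ / Fintype.card V) ∧
      ∀ i j, G.Adj i j → (P * Pᵀ) i j = Fintype.card κ / Fintype.card V * (τ / r) := by
  obtain ⟨p, hp⟩ := (isHermitian_iff_isSymm.mpr G.isSymm_adjMatrix).exists_aeval_eq_mul_transpose
    hP hAP hspan
  set α := ∑ k ∈ Finset.range (p.natDegree + 1), p.coeff k * a k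
  set β := ∑ k ∈ Finset.range (p.natDegree + 1), p.coeff k * b k
  have hdiag : ∀ i, (P * Pᵀ) i i = α := fun i => hp ▸ aeval_apply_of_pow_apply (hwalk1 · i) p
  have hadj : ∀ i j, G.Adj i j → (P * Pᵀ) i j = β := fun i j hij =>
    hp ▸ aeval_apply_of_pow_apply (hwalk2 · i j hij) p
  have htrace : trace (P * Pᵀ) = Fintype.card κ := by
    rw [trace_mul_comm, hP, trace_one]
  have hα : Fintype.card V * α = Fintype.card κ := by
    simp [← htrace, trace, hdiag]
  have hβ : Fintype.card V * (r * β) = τ * Fintype.card κ :=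
    calc Fintype.card V * (r * β) = ∑ i, ∑ j ∈ G.neighborFinset i, (P * Pᵀ) i j := by
          rw [Finset.sum_congr rfl fun i _ => hreg.sum_neighborFinset_of_adj (hadj i)]; simp
      _ = trace (G.adjMatrix ℝ * (P * Pᵀ)) := by rw [trace_mul_comm, trace_mul_adjMatrix]
      _ = τ * Fintype.card κ := by
          rw [← Matrix.mul_assoc, hAP, smul_mul, trace_smul, htrace, smul_eq_mul]
  have hV : ∀ i : V, (Fintype.card V : ℝ) ≠ 0 := fun i =>
    Nat.cast_ne_zero.mpr (Fintype.card_pos_iff.mpr ⟨i⟩).ne'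
  refine ⟨fun i => ?_, fun i j hij => ?_⟩
  · rw [hdiag, eq_div_iff (hV i), mul_comm, hα]
  · have hr : (r : ℝ) ≠ 0 := Nat.cast_ne_zero.mpr (hreg.ne_zero_of_adj hij)
    rw [hadj i j hij, div_mul_div_comm, eq_div_iff (mul_ne_zero (hV i) hr)]
    linear_combination hβ

theorem exists_gram_eq_of_optimal {m : Type*} [Fintype m] (hreg : G.IsRegularOfDegree r)
    (hr : r ≠ 0) (hτ : (G.adjMatrix ℝ - τ • 1).PosSemidef) (hP : Pᵀ * P = 1)
    (hspan : ∀ v, G.adjMatrix ℝ *ᵥ v = τ • v → ∃ w, P *ᵥ w = v) {c : ℝ} (hc : c ≠ 0)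
    (hEdiag : ∀ i, (P * Pᵀ) i i = c) (hEadj : ∀ i j, G.Adj i j → (P * Pᵀ) i j = c * (τ / r))
    {Q : Matrix V m ℝ} (hdiag : ∀ i, (Q * Qᵀ) i i = 1)
    (hadj : ∀ i j, G.Adj i j → (Q * Qᵀ) i j ≤ τ / r) :
    ∃ R : Matrix κ κ ℝ, R.IsSymm ∧ (∀ i j, (i = j ∨ G.Adj i j) → P i ⬝ᵥ R *ᵥ P j = 0) ∧
      Q * Qᵀ = c⁻¹ • (P * Pᵀ + P * R * Pᵀ) := by
  have hAM := G.adjMatrix_mul_gram_eq_smul hreg hr hτ hdiag hadj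
  have hM : (Q * Qᵀ).IsSymm := by rw [IsSymm, transpose_mul, transpose_transpose]
  have hPRP : P * (c • (Pᵀ * (Q * Qᵀ) * P) - 1) * Pᵀ = c • (Q * Qᵀ) - P * Pᵀ := by
    rw [Matrix.mul_sub, Matrix.sub_mul, Matrix.mul_smul, Matrix.smul_mul, Matrix.mul_one,
      mul_mul_transpose_mul_mul_transpose_of_mul_eq_smul hP hspan hM hAM]
  refine ⟨c • (Pᵀ * (Q * Qᵀ) * P) - 1, ?_, fun i j hij => ?_, ?_⟩
  · refine IsSymm.sub (IsSymm.smul ?_ _) isSymm_one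
    rw [IsSymm, transpose_mul, transpose_mul, hM.eq, transpose_transpose]
    simp only [Matrix.mul_assoc]
  · rw [← mul_mul_transpose_apply_s18, hPRP, Matrix.sub_apply, Matrix.smul_apply, smul_eq_mul]
    rcases hij with rfl | hij
    · rw [hdiag, hEdiag, mul_one, sub_self]
    · rw [G.apply_eq_of_adjMatrix_mul_eq_smul hreg hAM hdiag hadj hij, hEadj i j hij, sub_self]
  · rw [hPRP, add_sub_cancel, smul_smul, inv_mul_cancel₀ hc, one_smul]

end SimpleGraph

theorem stmt_18 {n d : ℕ} (G : SimpleGraph (Fin n)) [DecidableRel G.Adj]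
    (a b : ℕ → ℝ)
    (hwalk1 : ∀ (k : ℕ) (i : Fin n), ((G.adjMatrix ℝ) ^ k) i i = a k)
    (hwalk2 : ∀ (k : ℕ) (i j : Fin n), G.Adj i j → ((G.adjMatrix ℝ) ^ k) i j = b k)
    (r : ℕ) (hr : 1 ≤ r) (hreg : G.IsRegularOfDegree r)
    (τ : ℝ)
    (hτeig : ∃ v : Fin n → ℝ, v ≠ 0 ∧ (G.adjMatrix ℝ).mulVec v = τ • v)
    (hτpsd : (G.adjMatrix ℝ - τ • 1).PosSemidef)
    (P : Matrix (Fin n) (Fin d) ℝ)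
    (hPortho : Pᵀ * P = 1)
    (hAP : G.adjMatrix ℝ * P = τ • P)
    (hspan : ∀ v : Fin n → ℝ, (G.adjMatrix ℝ).mulVec v = τ • v →
        ∃ w : Fin d → ℝ, P.mulVec w = v)
    (m : ℕ) (q : Fin n → Fin m → ℝ) :
    ((∀ i, q i ⬝ᵥ q i = 1) ∧ (∀ i j, G.Adj i j → q i ⬝ᵥ q j ≤ τ / r))
    ↔
    (∃ R : Matrix (Fin d) (Fin d) ℝ, R.IsSymm ∧
        (∀ i j, (i = j ∨ G.Adj i j) → P i ⬝ᵥ R.mulVec (P j) = 0) ∧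
        Matrix.of (fun i j => q i ⬝ᵥ q j) = ((n : ℝ) / d) • (P * Pᵀ + P * R * Pᵀ)) := by
  obtain ⟨v, hv0, hv⟩ := hτeig
  have hn : (n : ℝ) ≠ 0 := by
    obtain ⟨i, -⟩ := Function.ne_iff.mp hv0
    exact Nat.cast_ne_zero.mpr i.pos.ne'
  have hd : (d : ℝ) ≠ 0 := by
    obtain ⟨w, rfl⟩ := hspan v hv
    have : d ≠ 0 := by rintro rfl; exact hv0 (by rw [Subsingleton.elim w 0, mulVec_zero])
    exact_mod_cast this
  obtain ⟨hEdiag, hEadj⟩ :=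
    G.mul_transpose_apply_of_walkRegular hwalk1 hwalk2 hreg hPortho hAP hspan
  simp only [Fintype.card_fin] at hEdiag hEadj
  have hc : (d / n : ℝ) ≠ 0 := div_ne_zero hd hn
  constructor
  · rintro ⟨hq1, hq2⟩
    rw [← inv_div]
    -- `of fun i j => q i ⬝ᵥ q j` is `of q * (of q)ᵀ` by definition.
    exact G.exists_gram_eq_of_optimal (Q := of q) hreg (by omega) hτpsd hPortho hspan hc hEdiag
      hEadj hq1 hq2
  · rintro ⟨R, -, hR, hM⟩
    rw [← inv_div] at hM
    obtain ⟨hq1, hq2⟩ := G.apply_eq_of_eq_inv_smul_add hc hEdiag hEadj hR hM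
    exact ⟨hq1, fun i j hij => (hq2 i j hij).le⟩
end
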